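/- arXiv:2110.10091 — 6 statements merged into one kernel-verified Lean document; each statement's English description precedes it below -/
import Mathlib

section
/- Let m and c be positive integers, and let M : {0,1}^m → T be any function whose image contains at most 2^c elements. For each u in the image of M let A_u = M^{−1}(u) and f̃_u(z) = (1/|A_u|) ∑_{x ∈ A_u} (−1)^{z·x}. Then for every integer k with 1 ≤ k ≤ m and every partition P of {1,…,m}, ∑_{u in the image of M} (|A_u|/2^m) · ∑_{z} f̃_u(z)² ≤ q(k), where the inner sum is over all z ∈ {0,1}^m that are indicator vectors of unions of exactly k parts of P. (This is the content of Lemma 4.24 (lem:rbound-paths).) -/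
open scoped Classical

noncomputable section

/-- The sign `(-1)^{z·x}` where `z·x = ∑ i, z i * x i` over `{0,1}^n`. -/
def chi {n : ℕ} (z x : Fin n → Bool) : ℝ :=
  (-1 : ℝ) ^ (Finset.univ.filter (fun i => z i = true ∧ x i = true)).card

/-- Normalized Fourier coefficient of (the indicator of) a nonempty `A ⊆ {0,1}^n`:
`f̃(z) = (1/|A|) ∑_{x ∈ A} (-1)^{z·x}`. -/
def ftilde {n : ℕ} (A : Finset (Fin n → Bool)) (z : Fin n → Bool) : ℝ :=
  (1 / A.card) * ∑ x ∈ A, chi z x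

/-- `q(k) = (8c/k)^k` for `k ≤ c` and `q(k) = 2^c` otherwise. -/
def qfun (c k : ℕ) : ℝ := if k ≤ c then ((8 * c : ℝ) / k) ^ k else 2 ^ c

namespace Stmt5Aux

open Finset

variable {m : ℕ}

lemma chi_eq_prod (z x : Fin m → Bool) :
    chi z x = ∏ i, (if z i = true ∧ x i = true then (-1 : ℝ) else 1) := by
  rw [chi, Finset.prod_ite, Finset.prod_const, Finset.prod_const, one_pow, mul_one]

lemma chi_mul (z₁ z₂ x : Fin m → Bool) :
    chi z₁ x * chi z₂ x = chi (fun i => xor (z₁ i) (z₂ i)) x := by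
  rw [chi_eq_prod, chi_eq_prod, chi_eq_prod, ← Finset.prod_mul_distrib]
  refine Finset.prod_congr rfl fun i _ => ?_
  cases h1 : z₁ i <;> cases h2 : z₂ i <;> cases hx : x i <;> simp

lemma chi_sq (z x : Fin m → Bool) : chi z x ^ 2 = 1 := by
  rw [chi, ← pow_mul, mul_comm, pow_mul]; norm_num

lemma chi_pow_even (z x : Fin m → Bool) (t : ℕ) : chi z x ^ (2 * t) = 1 := by
  rw [pow_mul, chi_sq, one_pow]

lemma chi_pow_odd (z x : Fin m → Bool) (t : ℕ) : chi z x ^ (2 * t + 1) = chi z x := by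
  rw [pow_succ, chi_pow_even, one_mul]

lemma chi_congr (z x x' : Fin m → Bool) (h : ∀ i, z i = true → x i = x' i) :
    chi z x = chi z x' := by
  unfold chi
  congr 2
  ext i
  simp only [Finset.mem_filter, Finset.mem_univ, true_and]
  constructor
  · rintro ⟨hz, hx⟩; exact ⟨hz, (h i hz) ▸ hx⟩
  · rintro ⟨hz, hx⟩; exact ⟨hz, (h i hz).symm ▸ hx⟩

/-- flip coordinate i₀ -/
def flip (i₀ : Fin m) (x : Fin m → Bool) : Fin m → Bool := fun i => if i = i₀ then !(x i) else x i

lemma flip_apply_ne (i₀ : Fin m) (x : Fin m → Bool) {i : Fin m} (h : i ≠ i₀) :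
    flip i₀ x i = x i := by simp [flip, h]

lemma flip_invol (i₀ : Fin m) (x : Fin m → Bool) : flip i₀ (flip i₀ x) = x := by
  funext i; by_cases h : i = i₀ <;> simp [flip, h]

def flipEquiv (i₀ : Fin m) : (Fin m → Bool) ≃ (Fin m → Bool) :=
  ⟨flip i₀, flip i₀, flip_invol i₀, flip_invol i₀⟩

lemma chi_flip (i₀ : Fin m) (z x : Fin m → Bool) :
    chi z (flip i₀ x) = (if z i₀ = true then (-1 : ℝ) else 1) * chi z x := by
  rw [chi_eq_prod, chi_eq_prod,
    ← Finset.mul_prod_erase Finset.univ _ (Finset.mem_univ i₀),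
    ← Finset.mul_prod_erase Finset.univ
      (fun i => if z i = true ∧ x i = true then (-1 : ℝ) else 1) (Finset.mem_univ i₀),
    ← mul_assoc]
  have herase : ∀ i ∈ Finset.univ.erase i₀,
      (if z i = true ∧ flip i₀ x i = true then (-1 : ℝ) else 1)
        = (if z i = true ∧ x i = true then (-1 : ℝ) else 1) := by
    intro i hi
    rw [flip_apply_ne i₀ x (Finset.mem_erase.mp hi).1]
  rw [Finset.prod_congr rfl herase]
  congr 1
  have : flip i₀ x i₀ = !(x i₀) := by simp [flip]
  rw [this]
  cases hz : z i₀ <;> cases hx : x i₀ <;> simp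

lemma sum_flip_neg (i₀ : Fin m) (F : (Fin m → Bool) → ℝ)
    (h : ∀ x, F (flip i₀ x) = -F x) :
    ∑ x : Fin m → Bool, F x = 0 := by
  have h2 : ∑ x : Fin m → Bool, F (flip i₀ x) = ∑ x : Fin m → Bool, F x :=
    Fintype.sum_equiv (flipEquiv i₀) _ _ (fun x => rfl)
  have h3 : ∑ x : Fin m → Bool, F (flip i₀ x) = -∑ x : Fin m → Bool, F x := by
    rw [← Finset.sum_neg_distrib]
    exact Finset.sum_congr rfl fun x _ => h x
  linarith [h2, h3]

lemma sum_even_range (n : ℕ) (f : ℕ → ℝ)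
    (hodd : ∀ j ∈ Finset.range (2 * n + 1), Odd j → f j = 0) :
    ∑ j ∈ Finset.range (2 * n + 1), f j = ∑ i ∈ Finset.range (n + 1), f (2 * i) := by
  induction n with
  | zero => simp
  | succ n ih =>
    have h1 : 2 * (n + 1) + 1 = (2 * n + 1) + 1 + 1 := by ring
    have hodd' : ∀ j ∈ Finset.range (2 * n + 1), Odd j → f j = 0 := fun j hj hjo =>
      hodd j (by rw [Finset.mem_range] at hj ⊢; omega) hjo
    have hz : f (2 * n + 1) = 0 :=
      hodd (2 * n + 1) (by rw [Finset.mem_range]; omega) ⟨n, by ring⟩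
    have h2 : 2 * n + 1 + 1 = 2 * (n + 1) := by ring
    rw [h1, Finset.sum_range_succ, Finset.sum_range_succ (n := 2 * n + 1), ih hodd', hz,
      add_zero, Finset.sum_range_succ (n := n + 1), h2]

lemma choose_bound (q : ℕ) : ∀ i ≤ q, (2 * q).choose (2 * i) ≤ q.choose i * (2 * q - 1) ^ i := by
  intro i
  induction i with
  | zero => simp
  | succ i ih =>
    intro h
    have hi : i ≤ q := Nat.le_of_succ_le h
    have hiq : i < q := h
    have ihh := ih hi
    -- key identities
    have kA : (2 * q).choose (2 * i + 1) * (2 * i + 1) = (2 * q).choose (2 * i) * (2 * q - 2 * i) :=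
      Nat.choose_succ_right_eq _ _
    have kB : (2 * q).choose (2 * i + 2) * (2 * i + 2)
        = (2 * q).choose (2 * i + 1) * (2 * q - (2 * i + 1)) := Nat.choose_succ_right_eq _ _
    have kC : q.choose (i + 1) * (i + 1) = q.choose i * (q - i) := Nat.choose_succ_right_eq _ _
    have hpos : 0 < (i + 1) * ((2 * i + 1) * (2 * i + 2)) := by positivity
    have h2i : 2 * (i + 1) = 2 * i + 2 := by ring
    rw [h2i]
    apply Nat.le_of_mul_le_mul_right _ hpos
    have e1 : (2 * q).choose (2 * i + 2) * ((i + 1) * ((2 * i + 1) * (2 * i + 2)))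
        = ((2 * q).choose (2 * i) * ((2 * q - 2 * i) * (2 * q - (2 * i + 1)))) * (i + 1) := by
      calc (2 * q).choose (2 * i + 2) * ((i + 1) * ((2 * i + 1) * (2 * i + 2)))
          = ((2 * q).choose (2 * i + 2) * (2 * i + 2)) * ((2 * i + 1) * (i + 1)) := by ring
        _ = ((2 * q).choose (2 * i + 1) * (2 * i + 1)) * ((2 * q - (2 * i + 1)) * (i + 1)) := by
            rw [kB]; ring
        _ = ((2 * q).choose (2 * i) * ((2 * q - 2 * i) * (2 * q - (2 * i + 1)))) * (i + 1) := by
            rw [kA]; ring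
    rw [e1]
    have e2 : q.choose (i + 1) * (2 * q - 1) ^ (i + 1) * ((i + 1) * ((2 * i + 1) * (2 * i + 2)))
        = (q.choose i * (q - i)) * ((2 * q - 1) ^ (i + 1) * ((2 * i + 1) * (2 * i + 2))) := by
      rw [← kC]; ring
    rw [e2]
    -- now pure arithmetic
    have harith : (2 * q - 2 * i) * (2 * q - (2 * i + 1)) * (i + 1)
        ≤ (q - i) * ((2 * q - 1) * ((2 * i + 1) * (2 * i + 2))) := by
      have h2 : 2 * q - 2 * i = 2 * (q - i) := by omega
      rw [h2]
      have h3 : 2 * q - (2 * i + 1) ≤ (2 * q - 1) * (2 * i + 1) := by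
        have : 2 * q - (2 * i + 1) ≤ 2 * q - 1 := by omega
        exact le_trans this (Nat.le_mul_of_pos_right _ (by omega))
      calc 2 * (q - i) * (2 * q - (2 * i + 1)) * (i + 1)
          ≤ 2 * (q - i) * ((2 * q - 1) * (2 * i + 1)) * (i + 1) := by
            exact Nat.mul_le_mul_right _ (Nat.mul_le_mul_left _ h3)
        _ = (q - i) * ((2 * q - 1) * ((2 * i + 1) * (2 * i + 2))) := by ring
    calc (2 * q).choose (2 * i) * ((2 * q - 2 * i) * (2 * q - (2 * i + 1))) * (i + 1)
        ≤ (q.choose i * (2 * q - 1) ^ i) * ((2 * q - 2 * i) * (2 * q - (2 * i + 1))) * (i + 1) := by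
          exact Nat.mul_le_mul_right _ (Nat.mul_le_mul_right _ ihh)
      _ = q.choose i * ((2 * q - 2 * i) * (2 * q - (2 * i + 1)) * (i + 1)) * (2 * q - 1) ^ i := by
          ring
      _ ≤ q.choose i * ((q - i) * ((2 * q - 1) * ((2 * i + 1) * (2 * i + 2)))) * (2 * q - 1) ^ i := by
          exact Nat.mul_le_mul_right _ (Nat.mul_le_mul_left _ harith)
      _ = q.choose i * (q - i) * ((2 * q - 1) ^ (i + 1) * ((2 * i + 1) * (2 * i + 2))) := by
          ring

lemma hoelder_pow {ι : Type*} (s : Finset ι) (u v : ι → ℝ)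
    (hu : ∀ i ∈ s, 0 ≤ u i) (hv : ∀ i ∈ s, 0 ≤ v i) (a b : ℕ) :
    (∑ i ∈ s, u i ^ a * v i ^ b) ^ (a + b)
      ≤ (∑ i ∈ s, u i ^ (a + b)) ^ a * (∑ i ∈ s, v i ^ (a + b)) ^ b := by
  rcases Nat.eq_zero_or_pos a with ha | ha
  · subst ha; simp
  rcases Nat.eq_zero_or_pos b with hb | hb
  · subst hb; simp
  set p : ℝ := ((a : ℝ) + b) / a with hp
  set q : ℝ := ((a : ℝ) + b) / b with hq
  have haR : (0 : ℝ) < a := by exact_mod_cast ha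
  have hbR : (0 : ℝ) < b := by exact_mod_cast hb
  have habR : (0 : ℝ) < (a : ℝ) + b := by linarith
  have hpq : Real.HolderConjugate p q := by
    rw [Real.holderConjugate_iff]; constructor
    · rw [hp, lt_div_iff₀ haR]; linarith
    · rw [hp, hq, inv_div, inv_div]
      field_simp
  have hH := Real.inner_le_Lp_mul_Lq s (fun i => u i ^ a) (fun i => v i ^ b) hpq
  have habs1 : ∀ i ∈ s, |u i ^ a| ^ p = u i ^ (a + b) := by
    intro i hi
    rw [abs_of_nonneg (pow_nonneg (hu i hi) a), ← Real.rpow_natCast (u i) a,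
      ← Real.rpow_mul (hu i hi), hp]
    have : (a : ℝ) * (((a : ℝ) + b) / a) = ((a : ℝ) + b) := by field_simp
    rw [this]
    rw [← Nat.cast_add, Real.rpow_natCast]
  have habs2 : ∀ i ∈ s, |v i ^ b| ^ q = v i ^ (a + b) := by
    intro i hi
    rw [abs_of_nonneg (pow_nonneg (hv i hi) b), ← Real.rpow_natCast (v i) b,
      ← Real.rpow_mul (hv i hi), hq]
    have : (b : ℝ) * (((a : ℝ) + b) / b) = ((a : ℝ) + b) := by field_simp
    rw [this]
    rw [← Nat.cast_add, Real.rpow_natCast]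
  rw [Finset.sum_congr rfl habs1, Finset.sum_congr rfl habs2] at hH
  -- now raise to the (a+b)-th power
  have hLnn : 0 ≤ ∑ i ∈ s, u i ^ a * v i ^ b :=
    Finset.sum_nonneg fun i hi => mul_nonneg (pow_nonneg (hu i hi) a) (pow_nonneg (hv i hi) b)
  have hSu : 0 ≤ ∑ i ∈ s, u i ^ (a + b) :=
    Finset.sum_nonneg fun i hi => pow_nonneg (hu i hi) _
  have hSv : 0 ≤ ∑ i ∈ s, v i ^ (a + b) :=
    Finset.sum_nonneg fun i hi => pow_nonneg (hv i hi) _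
  have step := pow_le_pow_left₀ hLnn hH (a + b)
  refine le_trans step ?_
  rw [mul_pow]
  have e1 : ((∑ i ∈ s, u i ^ (a + b)) ^ (1 / p)) ^ (a + b) = (∑ i ∈ s, u i ^ (a + b)) ^ a := by
    rw [← Real.rpow_natCast ((∑ i ∈ s, u i ^ (a + b)) ^ (1 / p)) (a + b),
      ← Real.rpow_mul hSu]
    have : 1 / p * ((a + b : ℕ) : ℝ) = (a : ℝ) := by
      rw [hp]; push_cast; field_simp
    rw [this, Real.rpow_natCast]
  have e2 : ((∑ i ∈ s, v i ^ (a + b)) ^ (1 / q)) ^ (a + b) = (∑ i ∈ s, v i ^ (a + b)) ^ b := by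
    rw [← Real.rpow_natCast ((∑ i ∈ s, v i ^ (a + b)) ^ (1 / q)) (a + b),
      ← Real.rpow_mul hSv]
    have : 1 / q * ((a + b : ℕ) : ℝ) = (b : ℝ) := by
      rw [hq]; push_cast; field_simp
    rw [this, Real.rpow_natCast]
  rw [e1, e2]

/-- indicator vector of the union of a family of parts -/
def zz (Q : Finset (Finset (Fin m))) : Fin m → Bool := fun i => decide (i ∈ Q.sup id)

lemma zz_eq_false {P S : Finset (Finset (Fin m))}
    (hdisj : ∀ p ∈ P, ∀ q ∈ P, p ≠ q → Disjoint p q)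
    (hS : S ⊆ P) {p : Finset (Fin m)} (hp : p ∈ P) (hpS : p ∉ S)
    {i : Fin m} (hi : i ∈ p) : zz S i = false := by
  simp only [zz, decide_eq_false_iff_not]
  intro hmem
  obtain ⟨p', hp'S, hip'⟩ := Finset.mem_sup.mp hmem
  have hne : p ≠ p' := fun h => hpS (h ▸ hp'S)
  exact Finset.disjoint_left.mp (hdisj p hp p' (hS hp'S) hne) hi hip'

lemma zz_singleton (p : Finset (Fin m)) (i : Fin m) : zz {p} i = decide (i ∈ p) := by
  simp [zz, Finset.sup_singleton]

lemma zz_insert {P S : Finset (Finset (Fin m))}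
    (hdisj : ∀ p ∈ P, ∀ q ∈ P, p ≠ q → Disjoint p q)
    (hS : S ⊆ P) {p : Finset (Fin m)} (hp : p ∈ P) (hpS : p ∉ S) :
    zz (insert p S) = fun i => xor (zz {p} i) (zz S i) := by
  funext i
  rw [zz_singleton]
  show decide (i ∈ (insert p S).sup id) = xor (decide (i ∈ p)) (zz S i)
  have hzS : zz S i = decide (i ∈ S.sup id) := rfl
  rw [hzS, Finset.sup_insert, id_eq, Finset.sup_eq_union]
  by_cases hip : i ∈ p <;> by_cases his : i ∈ S.sup id
  · exfalso
    have : zz S i = false := zz_eq_false hdisj hS hp hpS hip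
    simp only [zz, decide_eq_false_iff_not] at this
    exact this his
  all_goals simp [Finset.mem_union, hip, his]

lemma chi_zz_insert {P S : Finset (Finset (Fin m))}
    (hdisj : ∀ p ∈ P, ∀ q ∈ P, p ≠ q → Disjoint p q)
    (hS : S ⊆ P) {p : Finset (Fin m)} (hp : p ∈ P) (hpS : p ∉ S) (x : Fin m → Bool) :
    chi (zz (insert p S)) x = chi (zz {p}) x * chi (zz S) x := by
  rw [zz_insert hdisj hS hp hpS]
  exact (chi_mul _ _ x).symm

lemma chi_zz_empty (x : Fin m → Bool) : chi (zz (∅ : Finset (Finset (Fin m)))) x = 1 := by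
  simp [chi, zz]

lemma two_point (qq : ℕ) (hq : 1 ≤ qq) (g h Y : (Fin m → Bool) → ℝ) (i₀ : Fin m)
    (hginv : ∀ x, g (flip i₀ x) = g x) (hhinv : ∀ x, h (flip i₀ x) = h x)
    (hYflip : ∀ x, Y (flip i₀ x) = - Y x) (hY1 : ∀ x, Y x ^ 2 = 1)
    (A B : ℝ) (hA : 0 ≤ A) (hB : 0 ≤ B)
    (hgB : ∑ x : Fin m → Bool, g x ^ (2 * qq) ≤ 2 ^ m * A ^ qq)
    (hhB : ∑ x : Fin m → Bool, h x ^ (2 * qq) ≤ 2 ^ m * B ^ qq) :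
    ∑ x : Fin m → Bool, (g x + Y x * h x) ^ (2 * qq)
      ≤ 2 ^ m * (A + (2 * (qq : ℝ) - 1) * B) ^ qq := by
  have hqR : (1 : ℝ) ≤ (qq : ℝ) := by exact_mod_cast hq
  have hq0 : (0 : ℝ) ≤ 2 * (qq : ℝ) - 1 := by linarith
  set f : ℕ → ℝ := fun j =>
    (∑ x : Fin m → Bool, g x ^ j * (Y x * h x) ^ (2 * qq - j)) * ((2 * qq).choose j : ℝ)
    with hf
  have hexp : ∑ x : Fin m → Bool, (g x + Y x * h x) ^ (2 * qq)
      = ∑ j ∈ Finset.range (2 * qq + 1), f j := by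
    rw [Finset.sum_congr rfl fun x (_ : x ∈ Finset.univ) => add_pow (g x) (Y x * h x) (2 * qq)]
    rw [Finset.sum_comm]
    exact Finset.sum_congr rfl fun j _ => (Finset.sum_mul _ _ _).symm
  have hodd : ∀ j ∈ Finset.range (2 * qq + 1), Odd j → f j = 0 := by
    intro j hj hjodd
    rw [Finset.mem_range] at hj
    have hjlt : j < 2 * qq := by
      rcases hjodd with ⟨r, hr⟩; omega
    obtain ⟨t, ht⟩ : ∃ t, 2 * qq - j = 2 * t + 1 := by
      rcases hjodd with ⟨r, hr⟩; exact ⟨qq - r - 1, by omega⟩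
    have hzero : ∑ x : Fin m → Bool, g x ^ j * (Y x * h x) ^ (2 * qq - j) = 0 := by
      apply sum_flip_neg i₀
      intro x
      rw [hginv, hhinv, hYflip, ht]
      have hodd' : Odd (2 * t + 1) := ⟨t, by ring⟩
      rw [neg_mul, hodd'.neg_pow]
      ring
    rw [hf]
    simp only [hzero, zero_mul]
  have heven : ∀ i ∈ Finset.range (qq + 1),
      f (2 * i) ≤ 2 ^ m * (((qq.choose i : ℝ) * (2 * (qq : ℝ) - 1) ^ (qq - i)) * (A ^ i * B ^ (qq - i))) := by
    intro i hi
    rw [Finset.mem_range] at hi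
    have hiq : i ≤ qq := by omega
    have he : 2 * qq - 2 * i = 2 * (qq - i) := by omega
    have hterm : ∀ x : Fin m → Bool,
        g x ^ (2 * i) * (Y x * h x) ^ (2 * qq - 2 * i) = g x ^ (2 * i) * h x ^ (2 * (qq - i)) := by
      intro x
      rw [he, mul_pow, pow_mul (Y x), hY1, one_pow, one_mul]
    have hsum0 : ∑ x : Fin m → Bool, g x ^ (2 * i) * (Y x * h x) ^ (2 * qq - 2 * i)
        = ∑ x : Fin m → Bool, g x ^ (2 * i) * h x ^ (2 * (qq - i)) :=
      Finset.sum_congr rfl fun x _ => hterm x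
    -- Hölder bound
    have hH := hoelder_pow (Finset.univ : Finset (Fin m → Bool))
      (fun x => g x ^ 2) (fun x => h x ^ 2)
      (fun x _ => sq_nonneg _) (fun x _ => sq_nonneg _) i (qq - i)
    have hiq' : i + (qq - i) = qq := by omega
    rw [hiq'] at hH
    have hrw1 : ∀ x : Fin m → Bool, (g x ^ 2) ^ i * (h x ^ 2) ^ (qq - i)
        = g x ^ (2 * i) * h x ^ (2 * (qq - i)) := by
      intro x; rw [← pow_mul, ← pow_mul]
    have hrw2 : ∀ x : Fin m → Bool, (g x ^ 2) ^ qq = g x ^ (2 * qq) := fun x => (pow_mul _ 2 qq).symm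
    have hrw3 : ∀ x : Fin m → Bool, (h x ^ 2) ^ qq = h x ^ (2 * qq) := fun x => (pow_mul _ 2 qq).symm
    rw [Finset.sum_congr rfl fun x _ => hrw1 x, Finset.sum_congr rfl fun x _ => hrw2 x,
      Finset.sum_congr rfl fun x _ => hrw3 x] at hH
    have hgnn : (0:ℝ) ≤ ∑ x : Fin m → Bool, g x ^ (2 * qq) :=
      Finset.sum_nonneg fun x _ => by rw [pow_mul]; exact pow_nonneg (sq_nonneg _) _
    have hhnn : (0:ℝ) ≤ ∑ x : Fin m → Bool, h x ^ (2 * qq) :=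
      Finset.sum_nonneg fun x _ => by rw [pow_mul]; exact pow_nonneg (sq_nonneg _) _
    have h2m : (0:ℝ) ≤ 2 ^ m * A ^ qq := by positivity
    have h2m' : (0:ℝ) ≤ 2 ^ m * B ^ qq := by positivity
    have hH2 : (∑ x : Fin m → Bool, g x ^ (2 * i) * h x ^ (2 * (qq - i))) ^ qq
        ≤ (2 ^ m * (A ^ i * B ^ (qq - i))) ^ qq := by
      refine le_trans hH ?_
      calc (∑ x : Fin m → Bool, g x ^ (2*qq)) ^ i * (∑ x : Fin m → Bool, h x ^ (2*qq)) ^ (qq - i)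
          ≤ (2 ^ m * A ^ qq) ^ i * (2 ^ m * B ^ qq) ^ (qq - i) := by
            exact mul_le_mul (pow_le_pow_left₀ hgnn hgB i) (pow_le_pow_left₀ hhnn hhB (qq - i))
              (pow_nonneg hhnn _) (pow_nonneg h2m _)
        _ = ((2:ℝ) ^ m) ^ i * ((2:ℝ) ^ m) ^ (qq - i) * ((A ^ i) ^ qq * (B ^ (qq - i)) ^ qq) := by
            rw [mul_pow, mul_pow, pow_right_comm A, pow_right_comm B]; ring
        _ = (2 ^ m * (A ^ i * B ^ (qq - i))) ^ qq := by
            rw [← pow_add, hiq', mul_pow, mul_pow]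
    -- extract the qq-th root
    have hSnn : (0:ℝ) ≤ ∑ x : Fin m → Bool, g x ^ (2 * i) * h x ^ (2 * (qq - i)) :=
      Finset.sum_nonneg fun x _ => mul_nonneg
        (by rw [pow_mul]; exact pow_nonneg (sq_nonneg _) _)
        (by rw [pow_mul]; exact pow_nonneg (sq_nonneg _) _)
    have hRnn : (0:ℝ) ≤ 2 ^ m * (A ^ i * B ^ (qq - i)) := by positivity
    have hS : ∑ x : Fin m → Bool, g x ^ (2 * i) * h x ^ (2 * (qq - i))
        ≤ 2 ^ m * (A ^ i * B ^ (qq - i)) :=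
      le_of_pow_le_pow_left₀ (by omega) hRnn hH2
    -- the binomial coefficient bound
    have hCnat : (2 * qq).choose (2 * i) ≤ qq.choose i * (2 * qq - 1) ^ (qq - i) := by
      have h1 : (2 * qq).choose (2 * i) = (2 * qq).choose (2 * (qq - i)) := by
        rw [← he, ← Nat.choose_symm (by omega : 2 * i ≤ 2 * qq)]
      have h2 := choose_bound qq (qq - i) (by omega)
      rw [h1, ← Nat.choose_symm hiq]
      exact h2
    have hCR : ((2 * qq).choose (2 * i) : ℝ) ≤ (qq.choose i : ℝ) * (2 * (qq : ℝ) - 1) ^ (qq - i) := by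
      have hc : ((2 * qq - 1 : ℕ) : ℝ) = 2 * (qq : ℝ) - 1 := by
        rw [Nat.cast_sub (by omega)]; push_cast; ring
      calc ((2 * qq).choose (2 * i) : ℝ) ≤ ((qq.choose i * (2 * qq - 1) ^ (qq - i) : ℕ) : ℝ) := by
            exact_mod_cast hCnat
        _ = (qq.choose i : ℝ) * (2 * (qq : ℝ) - 1) ^ (qq - i) := by
            push_cast [hc]; ring
    -- combine
    rw [hf]
    simp only [hsum0]
    calc (∑ x : Fin m → Bool, g x ^ (2 * i) * h x ^ (2 * (qq - i))) * ((2 * qq).choose (2 * i) : ℝ)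
        ≤ (2 ^ m * (A ^ i * B ^ (qq - i))) * ((qq.choose i : ℝ) * (2 * (qq : ℝ) - 1) ^ (qq - i)) := by
          exact mul_le_mul hS hCR (Nat.cast_nonneg _) hRnn
      _ = 2 ^ m * (((qq.choose i : ℝ) * (2 * (qq : ℝ) - 1) ^ (qq - i)) * (A ^ i * B ^ (qq - i))) := by
          ring
  -- assemble
  rw [hexp, sum_even_range qq f hodd]
  calc ∑ i ∈ Finset.range (qq + 1), f (2 * i)
      ≤ ∑ i ∈ Finset.range (qq + 1),
          2 ^ m * (((qq.choose i : ℝ) * (2 * (qq : ℝ) - 1) ^ (qq - i)) * (A ^ i * B ^ (qq - i))) :=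
        Finset.sum_le_sum heven
    _ = 2 ^ m * ∑ i ∈ Finset.range (qq + 1),
          A ^ i * ((2 * (qq : ℝ) - 1) * B) ^ (qq - i) * (qq.choose i : ℝ) := by
        rw [← Finset.mul_sum]
        congr 1
        refine Finset.sum_congr rfl fun i _ => ?_
        rw [mul_pow]
        ring
    _ = 2 ^ m * (A + (2 * (qq : ℝ) - 1) * B) ^ qq := by rw [← add_pow]

lemma hypercontractivity (qq : ℕ) (hq : 1 ≤ qq)
    (P : Finset (Finset (Fin m))) (hne : ∀ p ∈ P, p.Nonempty)
    (hdisj : ∀ p ∈ P, ∀ q ∈ P, p ≠ q → Disjoint p q)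
    (R : Finset (Finset (Fin m))) :
    R ⊆ P → ∀ a : Finset (Finset (Fin m)) → ℝ,
      ∑ x : Fin m → Bool, (∑ S ∈ R.powerset, a S * chi (zz S) x) ^ (2 * qq)
        ≤ 2 ^ m * (∑ S ∈ R.powerset, (2 * (qq : ℝ) - 1) ^ S.card * a S ^ 2) ^ qq := by
  induction R using Finset.induction_on with
  | empty =>
    intro _ a
    rw [Finset.powerset_empty]
    simp only [Finset.sum_singleton]
    have h1 : ∀ x : Fin m → Bool, (a ∅ * chi (zz ∅) x) ^ (2 * qq) = (a ∅) ^ (2 * qq) := by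
      intro x; rw [chi_zz_empty, mul_one]
    rw [Finset.sum_congr rfl fun x _ => h1 x, Finset.sum_const, Finset.card_univ]
    have hcard : Fintype.card (Fin m → Bool) = 2 ^ m := by simp
    rw [hcard, nsmul_eq_mul]
    have h2 : ((2 * (qq:ℝ) - 1) ^ (∅ : Finset (Finset (Fin m))).card * a ∅ ^ 2) ^ qq
        = (a ∅) ^ (2 * qq) := by
      rw [Finset.card_empty, pow_zero, one_mul, ← pow_mul]
    rw [h2]
    push_cast
    exact le_refl _
  | @insert p R' hpR' ih =>
    intro hsub a
    have hp : p ∈ P := hsub (Finset.mem_insert_self p R')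
    have hR' : R' ⊆ P := fun t ht => hsub (Finset.mem_insert_of_mem ht)
    obtain ⟨i₀, hi₀⟩ := hne p hp
    have hSP : ∀ S ∈ R'.powerset, S ⊆ P := fun S hS => (Finset.mem_powerset.mp hS).trans hR'
    have hpS : ∀ S ∈ R'.powerset, p ∉ S := fun S hS hmem => hpR' ((Finset.mem_powerset.mp hS) hmem)
    set g : (Fin m → Bool) → ℝ := fun x => ∑ S ∈ R'.powerset, a S * chi (zz S) x with hgdef
    set h : (Fin m → Bool) → ℝ :=
      fun x => ∑ S ∈ R'.powerset, a (insert p S) * chi (zz S) x with hhdef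
    set Y : (Fin m → Bool) → ℝ := fun x => chi (zz {p}) x with hYdef
    have hLdec : ∀ x : Fin m → Bool,
        (∑ S ∈ (insert p R').powerset, a S * chi (zz S) x) = g x + Y x * h x := by
      intro x
      rw [Finset.sum_powerset_insert hpR']
      congr 1
      rw [hhdef, hYdef, Finset.mul_sum]
      refine Finset.sum_congr rfl fun S hS => ?_
      rw [chi_zz_insert hdisj (hSP S hS) hp (hpS S hS)]
      ring
    set Wg : ℝ := ∑ S ∈ R'.powerset, (2 * (qq:ℝ) - 1) ^ S.card * a S ^ 2 with hWgdef
    set Wh : ℝ := ∑ S ∈ R'.powerset, (2 * (qq:ℝ) - 1) ^ S.card * a (insert p S) ^ 2 with hWhdef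
    have hqR : (1:ℝ) ≤ (qq : ℝ) := by exact_mod_cast hq
    have hq0 : (0:ℝ) ≤ 2 * (qq:ℝ) - 1 := by linarith
    have hWgnn : 0 ≤ Wg :=
      Finset.sum_nonneg fun S _ => mul_nonneg (pow_nonneg hq0 _) (sq_nonneg _)
    have hWhnn : 0 ≤ Wh :=
      Finset.sum_nonneg fun S _ => mul_nonneg (pow_nonneg hq0 _) (sq_nonneg _)
    have hRHSdec : ∑ S ∈ (insert p R').powerset, (2 * (qq:ℝ) - 1) ^ S.card * a S ^ 2
        = Wg + (2 * (qq:ℝ) - 1) * Wh := by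
      rw [Finset.sum_powerset_insert hpR']
      congr 1
      rw [hWhdef, Finset.mul_sum]
      refine Finset.sum_congr rfl fun S hS => ?_
      rw [Finset.card_insert_of_notMem (hpS S hS), pow_succ]
      ring
    have hzzS0 : ∀ S ∈ R'.powerset, zz S i₀ = false := fun S hS =>
      zz_eq_false hdisj (hSP S hS) hp (hpS S hS) hi₀
    have hchiinv : ∀ S ∈ R'.powerset, ∀ x, chi (zz S) (flip i₀ x) = chi (zz S) x := by
      intro S hS x
      refine chi_congr (zz S) (flip i₀ x) x fun i hzi => ?_
      refine flip_apply_ne i₀ x fun hii => ?_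
      rw [hii, hzzS0 S hS] at hzi
      exact Bool.false_ne_true hzi
    have hginv : ∀ x, g (flip i₀ x) = g x := fun x =>
      Finset.sum_congr rfl fun S hS => by rw [hchiinv S hS x]
    have hhinv : ∀ x, h (flip i₀ x) = h x := fun x =>
      Finset.sum_congr rfl fun S hS => by rw [hchiinv S hS x]
    have hYflip : ∀ x, Y (flip i₀ x) = - Y x := by
      intro x
      rw [hYdef]
      have hz : zz ({p} : Finset (Finset (Fin m))) i₀ = true := by
        rw [zz_singleton]; exact decide_eq_true hi₀
      simp only [chi_flip i₀ (zz {p}) x, hz]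
      simp
    have hY1 : ∀ x, Y x ^ 2 = 1 := fun x => chi_sq _ _
    have hgB := ih hR' a
    have hhB := ih hR' (fun S => a (insert p S))
    calc ∑ x : Fin m → Bool, (∑ S ∈ (insert p R').powerset, a S * chi (zz S) x) ^ (2 * qq)
        = ∑ x : Fin m → Bool, (g x + Y x * h x) ^ (2 * qq) :=
          Finset.sum_congr rfl fun x _ => by rw [hLdec x]
      _ ≤ 2 ^ m * (Wg + (2 * (qq:ℝ) - 1) * Wh) ^ qq :=
          two_point qq hq g h Y i₀ hginv hhinv hYflip hY1 Wg Wh hWgnn hWhnn hgB hhB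
      _ = 2 ^ m * (∑ S ∈ (insert p R').powerset, (2 * (qq:ℝ) - 1) ^ S.card * a S ^ 2) ^ qq := by
          rw [hRHSdec]

lemma per_u (qq k : ℕ) (hq : 1 ≤ qq)
    (P : Finset (Finset (Fin m))) (hne : ∀ p ∈ P, p.Nonempty)
    (hdisj : ∀ p ∈ P, ∀ q ∈ P, p ≠ q → Disjoint p q)
    (A : Finset (Fin m → Bool)) (hA : A.Nonempty) :
    (A.card : ℝ) * (∑ Q ∈ P.powerset.filter (fun Q => Q.card = k), ftilde A (zz Q) ^ 2) ^ qq
      ≤ 2 ^ m * ((2 * (qq : ℝ) - 1) ^ k) ^ qq := by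
  have hqR : (1 : ℝ) ≤ (qq : ℝ) := by exact_mod_cast hq
  have hq0 : (0 : ℝ) ≤ 2 * (qq : ℝ) - 1 := by linarith
  have hMnn : (0:ℝ) ≤ (2 * (qq : ℝ) - 1) ^ k := pow_nonneg hq0 _
  have hWnn : (0:ℝ) ≤ ∑ Q ∈ P.powerset.filter (fun Q => Q.card = k), ftilde A (zz Q) ^ 2 :=
    Finset.sum_nonneg fun Q _ => sq_nonneg _
  have hcard : (0 : ℝ) < (A.card : ℝ) := by exact_mod_cast Finset.card_pos.mpr hA
  set QQ := P.powerset.filter (fun Q => Q.card = k) with hQQ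
  set W : ℝ := ∑ Q ∈ QQ, ftilde A (zz Q) ^ 2 with hW
  set Mc : ℝ := (2 * (qq : ℝ) - 1) ^ k with hMc
  rcases eq_or_lt_of_le hWnn with hW0 | hWpos
  · rw [← hW0, zero_pow (by omega : qq ≠ 0), mul_zero]
    positivity
  -- the test polynomial
  set L : (Fin m → Bool) → ℝ := fun x => ∑ Q ∈ QQ, ftilde A (zz Q) * chi (zz Q) x with hL
  have hHC : ∑ x : Fin m → Bool, L x ^ (2 * qq) ≤ 2 ^ m * (Mc * W) ^ qq := by
    have key := hypercontractivity qq hq P hne hdisj P (le_refl P)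
      (fun S => if S.card = k then ftilde A (zz S) else 0)
    have e1 : ∀ x : Fin m → Bool,
        (∑ S ∈ P.powerset, (if S.card = k then ftilde A (zz S) else 0) * chi (zz S) x)
          = L x := by
      intro x
      simp only [hL, hQQ, Finset.sum_filter]
      refine Finset.sum_congr rfl fun S _ => ?_
      by_cases hSk : S.card = k <;> simp [hSk]
    have e2 : ∑ S ∈ P.powerset,
        (2 * (qq : ℝ) - 1) ^ S.card * (if S.card = k then ftilde A (zz S) else 0) ^ 2
          = Mc * W := by
      simp only [hW, hQQ, hMc, Finset.mul_sum, Finset.sum_filter]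
      refine Finset.sum_congr rfl fun S _ => ?_
      by_cases hSk : S.card = k <;> simp [hSk]
    rw [Finset.sum_congr rfl fun x _ => congrArg (· ^ (2 * qq)) (e1 x), e2] at key
    exact key
  have hsumchi : ∀ z, ∑ x ∈ A, chi z x = (A.card : ℝ) * ftilde A z := by
    intro z
    rw [ftilde]
    field_simp
  have hAW : ∑ x ∈ A, L x = (A.card : ℝ) * W := by
    simp only [hL]
    rw [Finset.sum_comm, hW, Finset.mul_sum]
    refine Finset.sum_congr rfl fun Q _ => ?_
    rw [← Finset.mul_sum, hsumchi (zz Q)]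
    ring
  -- Jensen step
  have habs : (A.card : ℝ) * W ≤ ∑ x ∈ A, |L x| := by
    rw [← hAW]
    exact Finset.sum_le_sum fun x _ => le_abs_self _
  have hn : (2 * qq - 1) + 1 = 2 * qq := by omega
  have hpow : (∑ x ∈ A, |L x|) ^ (2 * qq)
      ≤ (A.card : ℝ) ^ (2 * qq - 1) * ∑ x ∈ A, |L x| ^ (2 * qq) := by
    have hj := pow_sum_div_card_le_sum_pow (f := fun x => |L x|)
      (s := A) (fun x _ => abs_nonneg _) (2 * qq - 1)
    rw [hn, div_le_iff₀ (by positivity)] at hj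
    linarith [hj]
  have habs2 : ∀ x : Fin m → Bool, |L x| ^ (2 * qq) = L x ^ (2 * qq) := by
    intro x
    rw [← abs_pow, abs_of_nonneg (by rw [pow_mul]; exact pow_nonneg (sq_nonneg _) _)]
  have hsub : ∑ x ∈ A, |L x| ^ (2 * qq) ≤ ∑ x : Fin m → Bool, L x ^ (2 * qq) := by
    rw [Finset.sum_congr rfl fun x _ => habs2 x]
    exact Finset.sum_le_sum_of_subset_of_nonneg (Finset.subset_univ A)
      (fun x _ _ => by rw [pow_mul]; exact pow_nonneg (sq_nonneg _) _)
  -- combine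
  have hchain : ((A.card : ℝ) * W) ^ (2 * qq)
      ≤ (A.card : ℝ) ^ (2 * qq - 1) * (2 ^ m * (Mc * W) ^ qq) := by
    calc ((A.card : ℝ) * W) ^ (2 * qq) ≤ (∑ x ∈ A, |L x|) ^ (2 * qq) :=
          pow_le_pow_left₀ (by positivity) habs _

      _ ≤ (A.card : ℝ) ^ (2 * qq - 1) * ∑ x ∈ A, |L x| ^ (2 * qq) := hpow
      _ ≤ (A.card : ℝ) ^ (2 * qq - 1) * ∑ x : Fin m → Bool, L x ^ (2 * qq) := by
          exact mul_le_mul_of_nonneg_left hsub (by positivity)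
      _ ≤ (A.card : ℝ) ^ (2 * qq - 1) * (2 ^ m * (Mc * W) ^ qq) := by
          exact mul_le_mul_of_nonneg_left hHC (by positivity)
  have h2 : qq + qq = 2 * qq := by ring
  have hexpand : ((A.card : ℝ) * W) ^ (2 * qq)
      = (A.card : ℝ) ^ (2 * qq - 1) * (((A.card : ℝ) * W ^ qq) * W ^ qq) := by
    calc ((A.card : ℝ) * W) ^ (2 * qq) = (A.card : ℝ) ^ (2 * qq) * W ^ (2 * qq) := mul_pow _ _ _
      _ = ((A.card : ℝ) ^ (2 * qq - 1) * (A.card : ℝ)) * (W ^ qq * W ^ qq) := by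
          have e1 : W ^ (2 * qq) = W ^ qq * W ^ qq := by rw [← h2, pow_add]
          have e2 : (A.card : ℝ) ^ (2 * qq) = (A.card : ℝ) ^ (2 * qq - 1) * (A.card : ℝ) := by
            conv_lhs => rw [← hn]
            rw [pow_succ]
          rw [e1, e2]
      _ = (A.card : ℝ) ^ (2 * qq - 1) * (((A.card : ℝ) * W ^ qq) * W ^ qq) := by ring
  rw [hexpand] at hchain
  have hc1 : ((A.card : ℝ) * W ^ qq) * W ^ qq ≤ 2 ^ m * (Mc * W) ^ qq :=
    (mul_le_mul_iff_right₀ (pow_pos hcard _)).mp hchain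
  rw [mul_pow Mc W qq, ← mul_assoc] at hc1
  exact (mul_le_mul_iff_left₀ (pow_pos hWpos qq)).mp hc1

lemma zz_inj {P : Finset (Finset (Fin m))} (hne : ∀ p ∈ P, p.Nonempty)
    (hdisj : ∀ p ∈ P, ∀ q ∈ P, p ≠ q → Disjoint p q)
    {Q₁ Q₂ : Finset (Finset (Fin m))} (h1 : Q₁ ⊆ P) (h2 : Q₂ ⊆ P)
    (h : zz Q₁ = zz Q₂) : Q₁ = Q₂ := by
  have key : ∀ {S T : Finset (Finset (Fin m))}, S ⊆ P → T ⊆ P →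
      (∀ i, i ∈ S.sup id → i ∈ T.sup id) → S ⊆ T := by
    intro S T hS hT hsup p hpS
    obtain ⟨i, hi⟩ := hne p (hS hpS)
    have hisup : i ∈ S.sup id := by
      have hle : (id p : Finset (Fin m)) ≤ S.sup id := Finset.le_sup hpS
      exact hle hi
    obtain ⟨p', hp'T, hip'⟩ := Finset.mem_sup.mp (hsup i hisup)
    have hpp' : p = p' := by
      by_contra hne'
      exact Finset.disjoint_left.mp (hdisj p (hS hpS) p' (hT hp'T) hne') hi hip'
    rw [hpp']
    exact hp'T
  have hiff : ∀ i, i ∈ Q₁.sup id ↔ i ∈ Q₂.sup id := by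
    intro i
    have := congrFun h i
    simpa [zz, decide_eq_decide] using this
  exact le_antisymm (key h1 h2 fun i hi => (hiff i).mp hi)
    (key h2 h1 fun i hi => (hiff i).mpr hi)

end Stmt5Aux

open Stmt5Aux in
/-- Lemma 4.24 (`lem:rbound-paths`): for any function `M : {0,1}^m → T` whose image
has at most `2^c` elements, `1 ≤ k ≤ m`, and any partition `P` of `[m]`,
`∑_u (|A_u|/2^m) ∑_z f̃_u(z)² ≤ q(k)`, where the inner sum ranges over indicator
vectors of unions of exactly `k` parts of `P` and `A_u = M⁻¹(u)`. -/
theorem stmt5 (m c : ℕ) (hm : 1 ≤ m) (hc : 0 < c)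
    (T : Type) (M : (Fin m → Bool) → T)
    (himg : (Finset.univ.image M).card ≤ 2 ^ c)
    (k : ℕ) (hk1 : 1 ≤ k) (hk2 : k ≤ m)
    (P : Finset (Finset (Fin m)))
    (hPne : ∀ p ∈ P, p.Nonempty)
    (hPdisj : ∀ p ∈ P, ∀ q ∈ P, p ≠ q → Disjoint p q)
    (hPcover : P.sup id = Finset.univ) :
    ∑ u ∈ Finset.univ.image M,
        ((Finset.univ.filter (fun x : Fin m → Bool => M x = u)).card : ℝ) / 2 ^ m *
          ∑ z ∈ Finset.univ.filter (fun z : Fin m → Bool =>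
              ∃ Q ⊆ P, Q.card = k ∧ z = fun i => decide (i ∈ Q.sup id)),
            ftilde (Finset.univ.filter (fun x : Fin m → Bool => M x = u)) z ^ 2 ≤
      qfun c k := by
  classical
  set QQ := P.powerset.filter (fun Q => Q.card = k) with hQQ
  -- rewrite the z-sum as a sum over QQ
  have hset : Finset.univ.filter (fun z : Fin m → Bool =>
      ∃ Q ⊆ P, Q.card = k ∧ z = fun i => decide (i ∈ Q.sup id)) = QQ.image zz := by
    ext z
    simp only [Finset.mem_filter, Finset.mem_univ, true_and, Finset.mem_image, hQQ,
      Finset.mem_powerset]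
    constructor
    · rintro ⟨Q, hQP, hQk, rfl⟩
      exact ⟨Q, ⟨hQP, hQk⟩, rfl⟩
    · rintro ⟨Q, ⟨hQP, hQk⟩, rfl⟩
      exact ⟨Q, hQP, hQk, rfl⟩
  have hzsum : ∀ A : Finset (Fin m → Bool),
      ∑ z ∈ Finset.univ.filter (fun z : Fin m → Bool =>
          ∃ Q ⊆ P, Q.card = k ∧ z = fun i => decide (i ∈ Q.sup id)), ftilde A z ^ 2
        = ∑ Q ∈ QQ, ftilde A (zz Q) ^ 2 := by
    intro A
    rw [hset]
    refine Finset.sum_image fun Q₁ hQ₁ Q₂ hQ₂ heq => ?_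
    rw [hQQ] at hQ₁ hQ₂
    exact zz_inj hPne hPdisj (Finset.mem_powerset.mp (Finset.mem_filter.mp hQ₁).1)
      (Finset.mem_powerset.mp (Finset.mem_filter.mp hQ₂).1) heq
  -- abbreviations
  set Af : T → Finset (Fin m → Bool) :=
    (fun u => Finset.univ.filter (fun x : Fin m → Bool => M x = u)) with hAf
  set Wf : T → ℝ := (fun u => ∑ Q ∈ QQ, ftilde (Af u) (zz Q) ^ 2) with hWf
  have hgoalrw : ∑ u ∈ Finset.univ.image M,
        ((Af u).card : ℝ) / 2 ^ m *
          ∑ z ∈ Finset.univ.filter (fun z : Fin m → Bool =>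
              ∃ Q ⊆ P, Q.card = k ∧ z = fun i => decide (i ∈ Q.sup id)),
            ftilde (Af u) z ^ 2
      = ∑ u ∈ Finset.univ.image M, ((Af u).card : ℝ) / 2 ^ m * Wf u :=
    Finset.sum_congr rfl fun u _ => by rw [hzsum (Af u)]
  rw [hgoalrw]
  -- choice of the exponent
  set qq : ℕ := if k ≤ c then c / k + 1 else 1 with hqq
  have hq1 : 1 ≤ qq := by
    rw [hqq]; split
    · exact Nat.le_add_left 1 _
    · exact le_refl 1
  have hqR : (1 : ℝ) ≤ (qq : ℝ) := by exact_mod_cast hq1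
  set Mk : ℝ := (2 * (qq : ℝ) - 1) ^ k with hMk
  have hMknn : 0 ≤ Mk := pow_nonneg (by linarith) _
  have hAne : ∀ u ∈ Finset.univ.image M, (Af u).Nonempty := by
    intro u hu
    obtain ⟨x, -, rfl⟩ := Finset.mem_image.mp hu
    exact ⟨x, by simp [hAf]⟩
  have hperu : ∀ u ∈ Finset.univ.image M,
      ((Af u).card : ℝ) * (Wf u) ^ qq ≤ 2 ^ m * Mk ^ qq := by
    intro u hu
    have h := per_u qq k hq1 P hPne hPdisj (Af u) (hAne u hu)
    rw [← hQQ] at h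
    exact h
  have hWnn : ∀ u, 0 ≤ Wf u := fun u => Finset.sum_nonneg fun Q _ => sq_nonneg _
  have h2m : (0 : ℝ) < 2 ^ m := by positivity
  -- weights sum to 1
  have hfib : (Finset.univ : Finset (Fin m → Bool)).card
      = ∑ u ∈ Finset.univ.image M, (Af u).card := by
    simp only [hAf]
    exact Finset.card_eq_sum_card_fiberwise fun x _ => Finset.mem_image_of_mem M (Finset.mem_univ x)
  have hwsum : ∑ u ∈ Finset.univ.image M, ((Af u).card : ℝ) / 2 ^ m = 1 := by
    rw [← Finset.sum_div]
    have hc1 : ∑ u ∈ Finset.univ.image M, ((Af u).card : ℝ)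
        = ((∑ u ∈ Finset.univ.image M, (Af u).card : ℕ) : ℝ) := by push_cast; rfl
    rw [hc1, ← hfib]
    have : ((Finset.univ : Finset (Fin m → Bool)).card : ℝ) = 2 ^ m := by
      rw [Finset.card_univ]
      simp
    rw [this]
    exact div_self (ne_of_gt h2m)
  -- Jensen
  have hJ : (∑ u ∈ Finset.univ.image M, ((Af u).card : ℝ) / 2 ^ m * Wf u) ^ qq
      ≤ ∑ u ∈ Finset.univ.image M, ((Af u).card : ℝ) / 2 ^ m * (Wf u) ^ qq := by
    have hcv := (convexOn_pow (𝕜 := ℝ) qq).map_sum_le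
      (t := Finset.univ.image M) (w := fun u => ((Af u).card : ℝ) / 2 ^ m) (p := Wf)
      (fun u _ => by positivity) hwsum (fun u _ => Set.mem_Ici.mpr (hWnn u))
    simpa [smul_eq_mul] using hcv
  -- sum the per-class bounds
  have hsum2 : ∑ u ∈ Finset.univ.image M, ((Af u).card : ℝ) / 2 ^ m * (Wf u) ^ qq
      ≤ ((Finset.univ.image M).card : ℝ) * Mk ^ qq := by
    have hterm : ∀ u ∈ Finset.univ.image M,
        ((Af u).card : ℝ) / 2 ^ m * (Wf u) ^ qq ≤ Mk ^ qq := by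
      intro u hu
      rw [div_mul_eq_mul_div, div_le_iff₀ h2m]
      calc ((Af u).card : ℝ) * (Wf u) ^ qq ≤ 2 ^ m * Mk ^ qq := hperu u hu
        _ = Mk ^ qq * 2 ^ m := by ring
    calc ∑ u ∈ Finset.univ.image M, ((Af u).card : ℝ) / 2 ^ m * (Wf u) ^ qq
        ≤ ∑ u ∈ Finset.univ.image M, Mk ^ qq := Finset.sum_le_sum hterm
      _ = ((Finset.univ.image M).card : ℝ) * Mk ^ qq := by
          rw [Finset.sum_const, nsmul_eq_mul]
  have hLnn : 0 ≤ ∑ u ∈ Finset.univ.image M, ((Af u).card : ℝ) / 2 ^ m * Wf u :=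
    Finset.sum_nonneg fun u _ => mul_nonneg (by positivity) (hWnn u)
  have hN : ((Finset.univ.image M).card : ℝ) ≤ (2 : ℝ) ^ c := by
    calc ((Finset.univ.image M).card : ℝ) ≤ ((2 ^ c : ℕ) : ℝ) := by exact_mod_cast himg
      _ = (2 : ℝ) ^ c := by push_cast; ring
  have hmain : (∑ u ∈ Finset.univ.image M, ((Af u).card : ℝ) / 2 ^ m * Wf u) ^ qq
      ≤ ((Finset.univ.image M).card : ℝ) * Mk ^ qq := le_trans hJ hsum2
  -- case analysis on k ≤ c
  by_cases hkc : k ≤ c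
  · -- q(k) = (8c/k)^k
    have hqfun : qfun c k = ((8 * c : ℝ) / k) ^ k := if_pos hkc
    have hqqval : qq = c / k + 1 := by rw [hqq, if_pos hkc]
    have hdm : k * (c / k) + c % k = c := Nat.div_add_mod c k
    have hmod : c % k < k := Nat.mod_lt _ (by omega)
    have he : k * qq = k * (c / k) + k := by rw [hqqval]; ring
    have hdivle : k * (c / k) ≤ c := by
      rw [mul_comm]
      exact Nat.div_mul_le_self c k
    have hkq1 : c ≤ k * qq := by
      calc c = k * (c / k) + c % k := hdm.symm
        _ ≤ k * (c / k) + k := Nat.add_le_add_left (le_of_lt hmod) _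
        _ = k * qq := he.symm
    have hkq2 : k * qq ≤ c + k := by
      rw [he]
      exact Nat.add_le_add_right hdivle k
    have hkposR : (0 : ℝ) < (k : ℝ) := by exact_mod_cast hk1
    have hkcR : (k : ℝ) ≤ (c : ℝ) := by exact_mod_cast hkc
    have hkqR : (k : ℝ) * (qq : ℝ) ≤ (c : ℝ) + (k : ℝ) := by exact_mod_cast hkq2
    have hbase : 2 * (2 * (qq : ℝ) - 1) ≤ 8 * (c : ℝ) / (k : ℝ) := by
      rw [le_div_iff₀ hkposR]
      have hexp : (2 * (2 * (qq : ℝ) - 1)) * k = 4 * ((k : ℝ) * qq) - 2 * k := by ring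
      rw [hexp]
      linarith
    have hqfnn : (0 : ℝ) ≤ (8 * c : ℝ) / k := by positivity
    have hpows : ((Finset.univ.image M).card : ℝ) * Mk ^ qq ≤ (((8 * c : ℝ) / k) ^ k) ^ qq := by
      have h2c : (2 : ℝ) ^ c ≤ ((2 : ℝ) ^ k) ^ qq := by
        rw [← pow_mul]
        exact pow_le_pow_right₀ (by norm_num) hkq1
      calc ((Finset.univ.image M).card : ℝ) * Mk ^ qq
          ≤ ((2 : ℝ) ^ k) ^ qq * Mk ^ qq := by
            exact mul_le_mul_of_nonneg_right (le_trans hN h2c) (pow_nonneg hMknn _)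
        _ = (((2 : ℝ) ^ k) * ((2 * (qq : ℝ) - 1) ^ k)) ^ qq := by rw [hMk, mul_pow]
        _ = ((2 * (2 * (qq : ℝ) - 1)) ^ k) ^ qq := by rw [← mul_pow]
        _ ≤ (((8 * c : ℝ) / k) ^ k) ^ qq := by
            refine pow_le_pow_left₀ (pow_nonneg (by linarith) _) ?_ qq
            exact pow_le_pow_left₀ (by linarith) hbase k
    rw [hqfun]
    refine le_of_pow_le_pow_left₀ (Nat.one_le_iff_ne_zero.mp hq1) (pow_nonneg hqfnn _) ?_
    exact le_trans hmain hpows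
  · -- q(k) = 2^c
    have hqfun : qfun c k = (2 : ℝ) ^ c := if_neg hkc
    have hqqval : qq = 1 := by rw [hqq, if_neg hkc]
    have hMk1 : Mk = 1 := by
      rw [hMk, hqqval]
      norm_num
    rw [hqfun]
    have := hmain
    rw [hqqval, pow_one, pow_one, hMk1, mul_one] at this
    exact le_trans this hN
end
end

section
/- Let s < t be positive integers, let S, T be finite sets, let h : {0,1}^s → S and g : S × {0,1}^{t−s} → T be arbitrary functions, and define M : {0,1}^t → T by M(x) = g(h(x_{≤s}), x_{(s,t]}), where x_{≤s} denotes the first s coordinates of x and x_{(s,t]} the remaining t−s coordinates. Let X be uniformly distributed on {0,1}^t. Then for every z ∈ {0,1}^t and every m ∈ T with P[M(X) = m] > 0: E[(−1)^{z·X} | M(X) = m] = ∑_{a ∈ S : P[h(X_{≤s}) = a and M(X) = m] > 0} P[h(X_{≤s}) = a | M(X) = m] · E[(−1)^{z_{≤s}·X_{≤s}} | h(X_{≤s}) = a] · E[(−1)^{z_{(s,t]}·X_{(s,t]}} | h(X_{≤s}) = a, M(X) = m]. (This is the decomposition of a typical message, Lemma 3.4 / lm:decomposition, stated for deterministic sequentially-computed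 messages.) -/
open scoped Classical

noncomputable section

/-- Lemma 3.4 (`lm:decomposition`), decomposition of a typical message, for
deterministic sequentially-computed messages.  Here the input
`X ∈ {0,1}^t = {0,1}^s × {0,1}^{t-s}` is uniform, its first `s` coordinates are `x.1`
and the remaining `t - s` coordinates are `x.2`, the intermediate message is
`h(x.1)` and the final message is `M x = g (h x.1, x.2)`; note that
`(-1)^{z·X} = (-1)^{z_{≤s}·X_{≤s}} · (-1)^{z_{(s,t]}·X_{(s,t]}}`.
Conditional expectations/probabilities appear as sums over filtered `Finset`s
divided by their cardinalities. -/
theorem stmt6 (s u : ℕ) (hs : 1 ≤ s) (hu : 1 ≤ u)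
    (S T : Type) [Fintype S] [Fintype T]
    (h : (Fin s → Bool) → S)
    (g : S × (Fin u → Bool) → T)
    (M : (Fin s → Bool) × (Fin u → Bool) → T)
    (hM : ∀ x, M x = g (h x.1, x.2))
    (z₁ : Fin s → Bool) (z₂ : Fin u → Bool) (m : T)
    (hm : 0 < (Finset.univ.filter
        (fun x : (Fin s → Bool) × (Fin u → Bool) => M x = m)).card) :
    (∑ x ∈ Finset.univ.filter
          (fun x : (Fin s → Bool) × (Fin u → Bool) => M x = m),
        chi z₁ x.1 * chi z₂ x.2) /
        ((Finset.univ.filter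
          (fun x : (Fin s → Bool) × (Fin u → Bool) => M x = m)).card : ℝ) =
      ∑ a ∈ Finset.univ.filter (fun a : S =>
          0 < (Finset.univ.filter (fun x : (Fin s → Bool) × (Fin u → Bool) =>
            h x.1 = a ∧ M x = m)).card),
        (((Finset.univ.filter (fun x : (Fin s → Bool) × (Fin u → Bool) =>
              h x.1 = a ∧ M x = m)).card : ℝ) /
            ((Finset.univ.filter (fun x : (Fin s → Bool) × (Fin u → Bool) =>
              M x = m)).card : ℝ)) *
          ((∑ x₁ ∈ Finset.univ.filter (fun x₁ : Fin s → Bool => h x₁ = a),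
              chi z₁ x₁) /
            ((Finset.univ.filter (fun x₁ : Fin s → Bool => h x₁ = a)).card : ℝ)) *
          ((∑ x ∈ Finset.univ.filter (fun x : (Fin s → Bool) × (Fin u → Bool) =>
              h x.1 = a ∧ M x = m), chi z₂ x.2) /
            ((Finset.univ.filter (fun x : (Fin s → Bool) × (Fin u → Bool) =>
              h x.1 = a ∧ M x = m)).card : ℝ)) := by
  classical
  set A : S → Finset (Fin s → Bool) :=
    fun a => Finset.univ.filter (fun x₁ => h x₁ = a) with hA
  set B : S → Finset (Fin u → Bool) :=
    fun a => Finset.univ.filter (fun x₂ => g (a, x₂) = m) with hB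
  have hE : ∀ a : S,
      (Finset.univ.filter (fun x : (Fin s → Bool) × (Fin u → Bool) =>
        h x.1 = a ∧ M x = m)) = (A a) ×ˢ (B a) := by
    intro a
    ext x
    simp only [Finset.mem_filter, Finset.mem_product, Finset.mem_univ, true_and,
      hM, hA, hB]
    constructor
    · rintro ⟨h1, h2⟩; exact ⟨h1, by rw [← h1]; exact h2⟩
    · rintro ⟨h1, h2⟩; exact ⟨h1, by rw [h1]; exact h2⟩
  have hN : ((Finset.univ.filter
      (fun x : (Fin s → Bool) × (Fin u → Bool) => M x = m)).card : ℝ) ≠ 0 := by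
    exact_mod_cast hm.ne'
  have hsum : (∑ x ∈ Finset.univ.filter
        (fun x : (Fin s → Bool) × (Fin u → Bool) => M x = m),
      chi z₁ x.1 * chi z₂ x.2) =
      ∑ a : S, ∑ x ∈ Finset.univ.filter
        (fun x : (Fin s → Bool) × (Fin u → Bool) => h x.1 = a ∧ M x = m),
        chi z₁ x.1 * chi z₂ x.2 := by
    rw [← Finset.sum_fiberwise_of_maps_to
      (g := fun x : (Fin s → Bool) × (Fin u → Bool) => h x.1)
      (fun x _ => Finset.mem_univ _)]
    refine Finset.sum_congr rfl fun a _ => Finset.sum_congr ?_ fun _ _ => rfl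
    ext x
    simp [and_comm]
  rw [hsum]
  rw [show (∑ a : S, ∑ x ∈ Finset.univ.filter
        (fun x : (Fin s → Bool) × (Fin u → Bool) => h x.1 = a ∧ M x = m),
        chi z₁ x.1 * chi z₂ x.2) =
      ∑ a ∈ Finset.univ.filter (fun a : S =>
          0 < (Finset.univ.filter (fun x : (Fin s → Bool) × (Fin u → Bool) =>
            h x.1 = a ∧ M x = m)).card),
        ∑ x ∈ Finset.univ.filter
          (fun x : (Fin s → Bool) × (Fin u → Bool) => h x.1 = a ∧ M x = m),
          chi z₁ x.1 * chi z₂ x.2 from by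
    refine (Finset.sum_subset (Finset.filter_subset _ _) ?_).symm
    intro a _ ha
    simp only [Finset.mem_filter, Finset.mem_univ, true_and, not_lt,
      Nat.le_zero, Finset.card_eq_zero] at ha
    rw [ha, Finset.sum_empty]]
  rw [Finset.sum_div]
  refine Finset.sum_congr rfl fun a ha => ?_
  simp only [Finset.mem_filter, Finset.mem_univ, true_and] at ha
  have hcard : (Finset.univ.filter (fun x : (Fin s → Bool) × (Fin u → Bool) =>
      h x.1 = a ∧ M x = m)).card = (A a).card * (B a).card := by
    rw [hE a, Finset.card_product]
  rw [hcard] at ha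
  have hApos : 0 < (A a).card := Nat.pos_of_mul_pos_right ha
  have hBpos : 0 < (B a).card := Nat.pos_of_mul_pos_right (by rwa [Nat.mul_comm] at ha)
  have hnum : (∑ x ∈ Finset.univ.filter
        (fun x : (Fin s → Bool) × (Fin u → Bool) => h x.1 = a ∧ M x = m),
        chi z₁ x.1 * chi z₂ x.2) =
      (∑ x₁ ∈ A a, chi z₁ x₁) * (∑ x₂ ∈ B a, chi z₂ x₂) := by
    rw [hE a, Finset.sum_product, Finset.sum_mul_sum]
  have hnum2 : (∑ x ∈ Finset.univ.filter
        (fun x : (Fin s → Bool) × (Fin u → Bool) => h x.1 = a ∧ M x = m),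
        chi z₂ x.2) =
      ((A a).card : ℝ) * (∑ x₂ ∈ B a, chi z₂ x₂) := by
    rw [hE a, Finset.sum_product,
      show (∑ x ∈ A a, ∑ y ∈ B a, chi z₂ (x, y).2) =
        ∑ _x ∈ A a, ∑ y ∈ B a, chi z₂ y from rfl,
      Finset.sum_const, nsmul_eq_mul]
  rw [hnum, hnum2, hcard]
  have hAne : ((A a).card : ℝ) ≠ 0 := Nat.cast_ne_zero.mpr hApos.ne'
  have hBne : ((B a).card : ℝ) ≠ 0 := Nat.cast_ne_zero.mpr hBpos.ne'
  rw [show (∑ x₁ ∈ Finset.univ.filter (fun x₁ : Fin s → Bool => h x₁ = a), chi z₁ x₁) =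
      ∑ x₁ ∈ A a, chi z₁ x₁ from rfl,
    show ((Finset.univ.filter (fun x₁ : Fin s → Bool => h x₁ = a)).card : ℝ) =
      ((A a).card : ℝ) from rfl]
  push_cast
  field_simp
end
end

section
/- Let (π, σ) be drawn uniformly at random from S_n × S_n. For every t ∈ [n] and every sequence B of t edges that occurs with positive probability as the board B_t, the conditional distribution of π given B_t = B is uniform on Π_t(B) = {π' ∈ S_n : ∃σ' ∈ S_n, (σ'(e_{π'(s)}))_{s=1}^t = B}; equivalently, for every π₀ ∈ Π_t(B), P[π = π₀ | B_t = B] = 1/|Π_t(B)|. -/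
open scoped Classical

noncomputable section

/-- `next` on the (0-indexed) vertex set `Fin n`: the 1-indexed vertex `j+1` goes to
`j+2` if `j+1 ≢ 0 (mod ℓ)` and to `j+2-ℓ` otherwise.  (The final `% n` is a no-op
whenever `ℓ ≥ 1` and `ℓ ∣ n`.) -/
def nxt (n ℓ : ℕ) (j : Fin n) : Fin n :=
  ⟨(if (j.val + 1) % ℓ = 0 then j.val + 1 - ℓ else j.val + 1) % n,
    Nat.mod_lt _ j.pos⟩

/-- The edge written on the board at (0-indexed) time `s`:
`σ(e_{π(s)})` where `e_v = (v, next v)`. -/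
def edgeAt (n ℓ : ℕ) (π σ : Equiv.Perm (Fin n)) (s : Fin n) : Fin n × Fin n :=
  (σ (π s), σ (nxt n ℓ (π s)))

/-- The board at time `t`: the sequence of the first `t` edges. -/
def bPrefix (n ℓ t : ℕ) (ht : t ≤ n) (π σ : Equiv.Perm (Fin n)) :
    Fin t → Fin n × Fin n :=
  fun s => edgeAt n ℓ π σ (Fin.castLE ht s)

/-- Lemma 4.1 (`lem:pidist`): conditioned on `B_t = B`, the permutation `π` is
uniform on `Π_t(B) = {π' : ∃ σ', (σ'(e_{π'(s)}))_{s=1}^t = B}`; i.e. for every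
`π₀ ∈ Π_t(B)`, `P[π = π₀ | B_t = B] = 1/|Π_t(B)|`. -/
theorem stmt8 (n ℓ : ℕ) (hn : 0 < n) (hl : 3 ≤ ℓ) (hdvd : ℓ ∣ n)
    (t : ℕ) (ht1 : 1 ≤ t) (ht2 : t ≤ n)
    (B : Fin t → Fin n × Fin n)
    (hB : 0 < (Finset.univ.filter
        (fun p : Equiv.Perm (Fin n) × Equiv.Perm (Fin n) =>
          bPrefix n ℓ t ht2 p.1 p.2 = B)).card)
    (π₀ : Equiv.Perm (Fin n))
    (hπ₀ : ∃ σ' : Equiv.Perm (Fin n), bPrefix n ℓ t ht2 π₀ σ' = B) :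
    ((Finset.univ.filter
        (fun p : Equiv.Perm (Fin n) × Equiv.Perm (Fin n) =>
          bPrefix n ℓ t ht2 p.1 p.2 = B ∧ p.1 = π₀)).card : ℝ) /
      ((Finset.univ.filter
        (fun p : Equiv.Perm (Fin n) × Equiv.Perm (Fin n) =>
          bPrefix n ℓ t ht2 p.1 p.2 = B)).card : ℝ) =
    1 / ((Finset.univ.filter (fun π' : Equiv.Perm (Fin n) =>
        ∃ σ' : Equiv.Perm (Fin n), bPrefix n ℓ t ht2 π' σ' = B)).card : ℝ) := by
  classical
  obtain ⟨σ₀, hσ₀⟩ := hπ₀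
  -- componentwise characterization
  have comp : ∀ (π σ : Equiv.Perm (Fin n)), bPrefix n ℓ t ht2 π σ = B ↔
      ∀ s : Fin t, σ (π (Fin.castLE ht2 s)) = (B s).1 ∧
        σ (nxt n ℓ (π (Fin.castLE ht2 s))) = (B s).2 := by
    intro π σ
    constructor
    · intro h s
      have := congrFun h s
      simpa [bPrefix, edgeAt, Prod.ext_iff] using this
    · intro h
      funext s
      simpa [bPrefix, edgeAt, Prod.ext_iff] using h s
  set F : Equiv.Perm (Fin n) → Finset (Equiv.Perm (Fin n)) :=
    fun π => Finset.univ.filter (fun σ => bPrefix n ℓ t ht2 π σ = B) with hF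
  set c := (F π₀).card with hc
  have key : ∀ π : Equiv.Perm (Fin n), (∃ σ, bPrefix n ℓ t ht2 π σ = B) →
      (F π).card = c := by
    rintro π ⟨σ₁, hσ₁⟩
    rw [hc]
    apply Finset.card_bij' (fun σ _ => σ * σ₁⁻¹ * σ₀) (fun σ _ => σ * σ₀⁻¹ * σ₁)
    · intro σ hσ
      simp only [hF, Finset.mem_filter, Finset.mem_univ, true_and] at hσ ⊢
      rw [comp] at hσ ⊢
      intro s
      have h1 := (comp π σ₁).mp hσ₁ s
      have h0 := (comp π₀ σ₀).mp hσ₀ s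
      have e1 : σ₀ (π₀ (Fin.castLE ht2 s)) = σ₁ (π (Fin.castLE ht2 s)) := by
        rw [h0.1, h1.1]
      have e2 : σ₀ (nxt n ℓ (π₀ (Fin.castLE ht2 s))) =
          σ₁ (nxt n ℓ (π (Fin.castLE ht2 s))) := by rw [h0.2, h1.2]
      constructor
      · have : (σ₁⁻¹ * σ₀) (π₀ (Fin.castLE ht2 s)) = π (Fin.castLE ht2 s) := by
          simp [Equiv.Perm.mul_apply, e1]
        calc (σ * σ₁⁻¹ * σ₀) (π₀ (Fin.castLE ht2 s))
            = σ ((σ₁⁻¹ * σ₀) (π₀ (Fin.castLE ht2 s))) := rfl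
          _ = σ (π (Fin.castLE ht2 s)) := by rw [this]
          _ = (B s).1 := (hσ s).1
      · have : (σ₁⁻¹ * σ₀) (nxt n ℓ (π₀ (Fin.castLE ht2 s))) =
            nxt n ℓ (π (Fin.castLE ht2 s)) := by
          simp [Equiv.Perm.mul_apply, e2]
        calc (σ * σ₁⁻¹ * σ₀) (nxt n ℓ (π₀ (Fin.castLE ht2 s)))
            = σ ((σ₁⁻¹ * σ₀) (nxt n ℓ (π₀ (Fin.castLE ht2 s)))) := rfl
          _ = σ (nxt n ℓ (π (Fin.castLE ht2 s))) := by rw [this]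
          _ = (B s).2 := (hσ s).2
    · intro σ hσ
      simp only [hF, Finset.mem_filter, Finset.mem_univ, true_and] at hσ ⊢
      rw [comp] at hσ ⊢
      intro s
      have h1 := (comp π σ₁).mp hσ₁ s
      have h0 := (comp π₀ σ₀).mp hσ₀ s
      have e1 : σ₁ (π (Fin.castLE ht2 s)) = σ₀ (π₀ (Fin.castLE ht2 s)) := by
        rw [h0.1, h1.1]
      have e2 : σ₁ (nxt n ℓ (π (Fin.castLE ht2 s))) =
          σ₀ (nxt n ℓ (π₀ (Fin.castLE ht2 s))) := by rw [h0.2, h1.2]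
      constructor
      · have : (σ₀⁻¹ * σ₁) (π (Fin.castLE ht2 s)) = π₀ (Fin.castLE ht2 s) := by
          simp [Equiv.Perm.mul_apply, e1]
        calc (σ * σ₀⁻¹ * σ₁) (π (Fin.castLE ht2 s))
            = σ ((σ₀⁻¹ * σ₁) (π (Fin.castLE ht2 s))) := rfl
          _ = σ (π₀ (Fin.castLE ht2 s)) := by rw [this]
          _ = (B s).1 := (hσ s).1
      · have : (σ₀⁻¹ * σ₁) (nxt n ℓ (π (Fin.castLE ht2 s))) =
            nxt n ℓ (π₀ (Fin.castLE ht2 s)) := by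
          simp [Equiv.Perm.mul_apply, e2]
        calc (σ * σ₀⁻¹ * σ₁) (nxt n ℓ (π (Fin.castLE ht2 s)))
            = σ ((σ₀⁻¹ * σ₁) (nxt n ℓ (π (Fin.castLE ht2 s)))) := rfl
          _ = σ (nxt n ℓ (π₀ (Fin.castLE ht2 s))) := by rw [this]
          _ = (B s).2 := (hσ s).2
    · intro σ hσ; group
    · intro σ hσ; group
  set PiS := Finset.univ.filter (fun π' : Equiv.Perm (Fin n) =>
      ∃ σ' : Equiv.Perm (Fin n), bPrefix n ℓ t ht2 π' σ' = B) with hPiS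
  -- numerator
  have hnum : (Finset.univ.filter
      (fun p : Equiv.Perm (Fin n) × Equiv.Perm (Fin n) =>
        bPrefix n ℓ t ht2 p.1 p.2 = B ∧ p.1 = π₀)).card = c := by
    rw [hc]
    refine Finset.card_bij' (fun p _ => p.2) (fun σ _ => (π₀, σ)) ?_ ?_ ?_ ?_
    · rintro ⟨π, σ⟩ hp
      simp only [Finset.mem_filter, Finset.mem_univ, true_and] at hp
      obtain ⟨h1, h2⟩ := hp
      subst h2
      simp only [hF, Finset.mem_filter, Finset.mem_univ, true_and]
      exact h1
    · intro σ hσ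
      simp only [hF, Finset.mem_filter, Finset.mem_univ, true_and] at hσ
      exact Finset.mem_filter.mpr ⟨Finset.mem_univ _, hσ, rfl⟩
    · rintro ⟨π, σ⟩ hp
      simp only [Finset.mem_filter, Finset.mem_univ, true_and] at hp
      simp [hp.2]
    · intro σ hσ; rfl
  -- denominator
  have hden : (Finset.univ.filter
      (fun p : Equiv.Perm (Fin n) × Equiv.Perm (Fin n) =>
        bPrefix n ℓ t ht2 p.1 p.2 = B)).card = PiS.card * c := by
    rw [Finset.card_eq_sum_card_fiberwise (f := Prod.fst) (t := PiS)
      (fun p hp => by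
        simp only [hPiS, Finset.mem_coe, Finset.mem_filter, Finset.mem_univ, true_and] at hp ⊢
        exact ⟨p.2, hp⟩)]
    rw [Finset.sum_congr rfl (fun π hπ => ?_), Finset.sum_const, smul_eq_mul]
    simp only [hPiS, Finset.mem_filter, Finset.mem_univ, true_and] at hπ
    rw [← key π hπ]
    refine Finset.card_bij' (fun p _ => p.2) (fun σ _ => (π, σ)) ?_ ?_ ?_ ?_
    · rintro ⟨π', σ⟩ hp
      simp only [Finset.mem_filter, Finset.mem_univ, true_and] at hp
      obtain ⟨h1, h2⟩ := hp
      subst h2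
      simp only [hF, Finset.mem_filter, Finset.mem_univ, true_and]
      exact h1
    · intro σ hσ
      simp only [hF, Finset.mem_filter, Finset.mem_univ, true_and] at hσ
      exact Finset.mem_filter.mpr ⟨Finset.mem_filter.mpr ⟨Finset.mem_univ _, hσ⟩, rfl⟩
    · rintro ⟨π', σ⟩ hp
      simp only [Finset.mem_filter, Finset.mem_univ, true_and] at hp
      simp [hp.2]
    · intro σ hσ; rfl
  have hcpos : 0 < c := by
    rw [hc]
    exact Finset.card_pos.mpr ⟨σ₀, by
      simp only [hF, Finset.mem_filter, Finset.mem_univ, true_and]; exact hσ₀⟩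
  have hPpos : 0 < PiS.card :=
    Finset.card_pos.mpr ⟨π₀, Finset.mem_filter.mpr ⟨Finset.mem_univ _, ⟨σ₀, hσ₀⟩⟩⟩
  have hc' : (c : ℝ) ≠ 0 := Nat.cast_ne_zero.mpr hcpos.ne'
  rw [hnum, hden, Nat.cast_mul, mul_comm, ← div_div, div_self hc']
end
end

section
/- Let (π, σ) be drawn uniformly at random from S_n × S_n. For every t ∈ [n−1] with t ≤ n/8, every sequence B of t edges that occurs with positive probability as the board B_t, every multiset α of positive integers, every z ∈ {0,1}^t such that (when B_t = B) z ∼_t α, and every positive integer a: the conditional probability, given B_t = B, that the edge σ(e_{π(t+1)}) arriving at time t+1 is incident to exactly one connected component of O_t^z and that component has exactly a edges, is at most 3·α[a]/n, where α[a] is the multiplicity of a in α. -/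
open scoped Classical

noncomputable section

/-- Given a board prefix `b : Fin t → Fin n × Fin n` and `z ∈ {0,1}^t`,
the graph `O_t^z` on `[n]` whose edges are the board edges selected by `z`. -/
def SubG {n t : ℕ} (b : Fin t → Fin n × Fin n) (z : Fin t → Bool) :
    SimpleGraph (Fin n) where
  Adj u v := u ≠ v ∧ ∃ s : Fin t, z s = true ∧ (b s = (u, v) ∨ b s = (v, u))
  symm := by
    constructor
    rintro u v ⟨huv, s, hs, hb⟩
    exact ⟨huv.symm, s, hs, hb.symm⟩
  loopless := by
    constructor
    rintro u ⟨hu, -⟩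
    exact hu rfl

/-- The number of selected edges in the connected component of `u` in `O_t^z`. -/
def edgeCountFrom {n t : ℕ} (b : Fin t → Fin n × Fin n) (z : Fin t → Bool)
    (u : Fin n) : ℕ :=
  (Finset.univ.filter (fun s : Fin t =>
    z s = true ∧ (SubG b z).Reachable u (b s).1)).card

/-- The number of connected components of `O_t^z` having exactly `i` edges
(a component is identified by its least vertex; components of `O_t^z` that contain
no selected edge, i.e. isolated vertices, are not counted). -/
def compCount {n t : ℕ} (b : Fin t → Fin n × Fin n) (z : Fin t → Bool) (i : ℕ) : ℕ :=
  (Finset.univ.filter (fun u : Fin n =>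
    (∃ w, (SubG b z).Adj u w) ∧
    (∀ v : Fin n, (SubG b z).Reachable u v → u ≤ v) ∧
    edgeCountFrom b z u = i)).card

/-- `z ∼_t α`: `O_t^z` is a union of connected components of the observed graph
`O_t`, and for every `i ≥ 1` the number of components of `O_t^z` with exactly `i`
edges equals the multiplicity `α[i]`. -/
def SimRel {n t : ℕ} (b : Fin t → Fin n × Fin n) (z : Fin t → Bool)
    (α : Multiset ℕ) : Prop :=
  (∀ u v : Fin n, (∃ w, (SubG b z).Adj u w) →
      (SubG b (fun _ => true)).Adj u v → (SubG b z).Adj u v) ∧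
  (∀ i : ℕ, 0 < i → compCount b z i = Multiset.count i α)

/-- The newly arriving edge `e` is incident to exactly one connected component of
`O_t^z`, and that component has exactly `a` edges.  The three disjuncts are:
only the first endpoint lies in a component of `O_t^z`, only the second does, or
both endpoints lie in the same component. -/
def ExtEvent {n t : ℕ} (b : Fin t → Fin n × Fin n) (z : Fin t → Bool)
    (e : Fin n × Fin n) (a : ℕ) : Prop :=
  ((∃ w, (SubG b z).Adj e.1 w) ∧ ¬(∃ w, (SubG b z).Adj e.2 w) ∧
      edgeCountFrom b z e.1 = a) ∨
  (¬(∃ w, (SubG b z).Adj e.1 w) ∧ (∃ w, (SubG b z).Adj e.2 w) ∧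
      edgeCountFrom b z e.2 = a) ∨
  ((∃ w, (SubG b z).Adj e.1 w) ∧ (∃ w, (SubG b z).Adj e.2 w) ∧
      (SubG b z).Reachable e.1 e.2 ∧ edgeCountFrom b z e.1 = a)


section Aux

open Finset

lemma nxt_val {n ℓ : ℕ} (hn : 0 < n) (hl : 3 ≤ ℓ) (hdvd : ℓ ∣ n) (j : Fin n) :
    (nxt n ℓ j).val = if (j.val + 1) % ℓ = 0 then j.val + 1 - ℓ else j.val + 1 := by
  have hj := j.isLt
  have hnl : n % ℓ = 0 := Nat.eq_zero_of_dvd_of_lt hdvd |> fun _ => Nat.mod_eq_zero_of_dvd hdvd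
  unfold nxt
  split_ifs with h
  · have h1 : ℓ ∣ (j.val + 1) := Nat.dvd_of_mod_eq_zero h
    have h2 : ℓ ≤ j.val + 1 := Nat.le_of_dvd (by omega) h1
    exact Nat.mod_eq_of_lt (by omega)
  · have hne : j.val + 1 ≠ n := by
      rintro hh
      exact h (by rw [hh]; exact hnl)
    exact Nat.mod_eq_of_lt (by omega)

lemma nxt_ne {n ℓ : ℕ} (hn : 0 < n) (hl : 3 ≤ ℓ) (hdvd : ℓ ∣ n) (j : Fin n) :
    nxt n ℓ j ≠ j := by
  intro h
  have hv := congrArg Fin.val h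
  rw [nxt_val hn hl hdvd] at hv
  split_ifs at hv with h1
  · have := Nat.le_of_dvd (by omega) (Nat.dvd_of_mod_eq_zero h1)
    omega
  · omega

lemma nxt_inj {n ℓ : ℕ} (hn : 0 < n) (hl : 3 ≤ ℓ) (hdvd : ℓ ∣ n) :
    Function.Injective (nxt n ℓ) := by
  intro x y h
  have hv := congrArg Fin.val h
  rw [nxt_val hn hl hdvd, nxt_val hn hl hdvd] at hv
  apply Fin.ext
  split_ifs at hv with h1 h2 h2
  · have := Nat.le_of_dvd (by omega) (Nat.dvd_of_mod_eq_zero h1)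
    have := Nat.le_of_dvd (by omega) (Nat.dvd_of_mod_eq_zero h2)
    omega
  · exfalso
    have ha : ℓ ∣ (x.val + 1) := Nat.dvd_of_mod_eq_zero h1
    have hle : ℓ ≤ x.val + 1 := Nat.le_of_dvd (by omega) ha
    have hd : ℓ ∣ (y.val + 1) := by
      have h3 := Nat.dvd_sub ha (dvd_refl ℓ)
      rwa [hv] at h3
    exact h2 (Nat.mod_eq_zero_of_dvd hd)
  · exfalso
    have ha : ℓ ∣ (y.val + 1) := Nat.dvd_of_mod_eq_zero h2
    have hle : ℓ ≤ y.val + 1 := Nat.le_of_dvd (by omega) ha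
    have hd : ℓ ∣ (x.val + 1) := by
      have h3 := Nat.dvd_sub ha (dvd_refl ℓ)
      rwa [← hv] at h3
    exact h1 (Nat.mod_eq_zero_of_dvd hd)
  · omega

end Aux

section Graph

open Finset

variable {n t : ℕ} {B : Fin t → Fin n × Fin n} {z : Fin t → Bool}

lemma reach_count_eq {x y : Fin n} (h : (SubG B z).Reachable x y) :
    edgeCountFrom B z x = edgeCountFrom B z y := by
  unfold edgeCountFrom
  congr 1
  apply Finset.filter_congr
  intro s _
  constructor
  · rintro ⟨hs, hr⟩; exact ⟨hs, h.symm.trans hr⟩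
  · rintro ⟨hs, hr⟩; exact ⟨hs, h.trans hr⟩

lemma exists_adj_of_reachable_ne {x y : Fin n} (h : (SubG B z).Reachable x y)
    (hne : x ≠ y) : ∃ w, (SubG B z).Adj x w := by
  obtain ⟨p⟩ := h
  cases p with
  | nil => exact absurd rfl hne
  | cons hadj _ => exact ⟨_, hadj⟩

/-- A connected component has at most (number of its selected edge indices) + 1
vertices. -/
lemma comp_card_le (h0 : 0 < t) (u : Fin n) :
    (Finset.univ.filter (fun x => (SubG B z).Reachable u x)).card
      ≤ edgeCountFrom B z u + 1 := by
  classical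
  set H := SubG B z with hH
  set Ru := Finset.univ.filter (fun x => H.Reachable u x) with hRu
  have hu : u ∈ Ru := by
    simp only [hRu, Finset.mem_filter, Finset.mem_univ, true_and]
    exact SimpleGraph.Reachable.refl u
  have hcard : Ru.card = (Ru.erase u).card + 1 := by
    rw [Finset.card_erase_of_mem hu]
    have : 0 < Ru.card := Finset.card_pos.2 ⟨u, hu⟩
    omega
  rw [hcard]
  have key : ∀ x ∈ Ru.erase u, ∃ s : Fin t, z s = true ∧ H.Reachable u (B s).1 ∧
      ∃ y, (B s = (x, y) ∨ B s = (y, x)) ∧ H.dist u y < H.dist u x := by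
    intro x hx
    rw [Finset.mem_erase] at hx
    obtain ⟨hxu, hx⟩ := hx
    have hux : H.Reachable u x := by simpa [hRu] using hx
    obtain ⟨p, hp⟩ := (hux.symm).exists_walk_length_eq_dist
    cases p with
    | nil => exact absurd rfl hxu
    | @cons _ y _ hadj p' =>
      have hy : H.Reachable u y := (SimpleGraph.Walk.reachable p').symm
      have hdy : H.dist u y < H.dist u x := by
        have h1 : H.dist y u ≤ p'.length := SimpleGraph.dist_le p'
        have h2 : H.dist x u = p'.length + 1 := by
          rw [← hp, SimpleGraph.Walk.length_cons]
        have e1 : H.dist u y = H.dist y u := SimpleGraph.dist_comm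
        have e2 : H.dist u x = H.dist x u := SimpleGraph.dist_comm
        omega
      obtain ⟨hne, s, hzs, hbs⟩ := hadj
      refine ⟨s, hzs, ?_, y, hbs, hdy⟩
      rcases hbs with h | h
      · rw [h]; exact hux
      · rw [h]; exact hy
  have hECF : edgeCountFrom B z u
      = (Finset.univ.filter (fun s : Fin t => z s = true ∧ H.Reachable u (B s).1)).card := rfl
  rw [hECF]
  have hinj : (Ru.erase u).card ≤
      (Finset.univ.filter (fun s : Fin t => z s = true ∧ H.Reachable u (B s).1)).card := by
    set Q : Fin n → Fin t → Prop := fun x s => z s = true ∧ H.Reachable u (B s).1 ∧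
      ∃ y, (B s = (x, y) ∨ B s = (y, x)) ∧ H.dist u y < H.dist u x with hQ
    have hkey : ∀ x ∈ Ru.erase u, ∃ s, Q x s := key
    apply Finset.card_le_card_of_injOn
      (fun x => if h : ∃ s, Q x s then h.choose else (⟨0, h0⟩ : Fin t))
    · intro x hx
      have he : ∃ s, Q x s := hkey x hx
      have hspec := he.choose_spec
      rw [Finset.mem_coe, Finset.mem_filter]
      simp only [dif_pos he]
      exact ⟨Finset.mem_univ _, hspec.1, hspec.2.1⟩
    · intro x hx x' hx' hFe
      have he : ∃ s, Q x s := hkey x hx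
      have he' : ∃ s, Q x' s := hkey x' hx'
      simp only [dif_pos he, dif_pos he'] at hFe
      obtain ⟨-, -, y, hy, hdy⟩ := he.choose_spec
      obtain ⟨-, -, y', hy', hdy'⟩ := he'.choose_spec
      rw [hFe] at hy
      rcases hy with h1 | h1 <;> rcases hy' with h2 | h2 <;>
        first
        | (have h12 := h1.symm.trans h2
           simp only [Prod.mk.injEq] at h12
           first
           | exact h12.1
           | exact h12.2
           | (exfalso
              rw [← h12.1, ← h12.2] at hdy'
              omega)
           | (exfalso
              rw [← h12.2, ← h12.1] at hdy'
              omega))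
  exact Nat.add_le_add_right hinj 1


lemma rep_spec (x : Fin n) (hadj : ∃ w, (SubG B z).Adj x w) :
    ∃ u, ((∃ w, (SubG B z).Adj u w) ∧ (∀ v, (SubG B z).Reachable u v → u ≤ v) ∧
      edgeCountFrom B z u = edgeCountFrom B z x) ∧ (SubG B z).Reachable u x := by
  classical
  set H := SubG B z with hH
  set Rx := Finset.univ.filter (fun v => H.Reachable x v) with hRx
  have hne : Rx.Nonempty := ⟨x, by
    simp only [hRx, Finset.mem_filter, Finset.mem_univ, true_and]
    exact SimpleGraph.Reachable.refl x⟩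
  obtain ⟨u, hmem, humin⟩ : ∃ u, u ∈ Rx ∧ ∀ v ∈ Rx, u ≤ v :=
    ⟨Rx.min' hne, Rx.min'_mem hne, fun v hv => Rx.min'_le v hv⟩
  have hxu : H.Reachable x u := by
    simpa only [hRx, Finset.mem_filter, Finset.mem_univ, true_and] using hmem
  have hux : H.Reachable u x := hxu.symm
  refine ⟨u, ⟨?_, ?_, reach_count_eq hux⟩, hux⟩
  · by_cases hequ : u = x
    · subst hequ; exact hadj
    · exact exists_adj_of_reachable_ne hux hequ
  · intro v hv
    apply humin
    simp only [hRx, Finset.mem_filter, Finset.mem_univ, true_and]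
    exact hxu.trans hv

end Graph

section Core

open Finset

/-- Core counting bound: for a fixed pair of permutations consistent with the board,
the number of unrevealed indices whose edge triggers the extension event is at most
twice the number of `a`-components. -/
lemma core_bound (n ℓ : ℕ) (hn : 0 < n) (hl : 3 ≤ ℓ) (hdvd : ℓ ∣ n)
    (t : ℕ) (ht1 : 1 ≤ t) (ht : t ≤ n)
    (B : Fin t → Fin n × Fin n) (z : Fin t → Bool)
    (a : ℕ) (ha : 0 < a)
    (π σ : Equiv.Perm (Fin n)) (hp : bPrefix n ℓ t ht π σ = B) :
    (Finset.univ.filter (fun r : Fin n =>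
        t ≤ r.val ∧ ExtEvent B z (edgeAt n ℓ π σ r) a)).card ≤ 2 * compCount B z a := by
  classical
  set H := SubG B z with hH
  -- the board entries
  have hBs : ∀ s : Fin t, B s = (σ (π (Fin.castLE ht s)), σ (nxt n ℓ (π (Fin.castLE ht s)))) :=
    fun s => (congrFun hp s).symm
  have hBne : ∀ s : Fin t, (B s).1 ≠ (B s).2 := by
    intro s h
    rw [hBs s] at h
    exact nxt_ne hn hl hdvd _ (σ.injective h.symm)
  have hAdjs : ∀ s : Fin t, z s = true → H.Adj (B s).1 (B s).2 := by
    intro s hs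
    exact ⟨hBne s, s, hs, Or.inl rfl⟩
  -- the vertex set of all a-components
  set Va : Finset (Fin n) :=
    Finset.univ.filter (fun x => (∃ w, H.Adj x w) ∧ edgeCountFrom B z x = a) with hVa
  set Comps : Finset (Fin n) :=
    Finset.univ.filter (fun u : Fin n =>
      (∃ w, H.Adj u w) ∧ (∀ v : Fin n, H.Reachable u v → u ≤ v) ∧
      edgeCountFrom B z u = a) with hComps
  have hCompsCard : Comps.card = compCount B z a := rfl
  have hVaClosed : ∀ x y : Fin n, x ∈ Va → H.Reachable x y → y ∈ Va := by
    intro x y hx hr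
    rw [hVa, Finset.mem_filter] at hx ⊢
    obtain ⟨-, hadj, hcnt⟩ := hx
    refine ⟨Finset.mem_univ _, ?_, by rw [← reach_count_eq hr, hcnt]⟩
    by_cases hxy : y = x
    · subst hxy; exact hadj
    · exact exists_adj_of_reachable_ne hr.symm hxy
  -- each element of Va has a representative in Comps
  have hrep : ∀ x ∈ Va, ∃ u ∈ Comps, H.Reachable u x := by
    intro x hx
    rw [hVa, Finset.mem_filter] at hx
    obtain ⟨-, hadj, hcnt⟩ := hx
    obtain ⟨u, ⟨h1, h2, h3⟩, h4⟩ := rep_spec x hadj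
    exact ⟨u, by
      rw [hComps, Finset.mem_filter]
      exact ⟨Finset.mem_univ _, h1, h2, by rw [h3, hcnt]⟩, h4⟩
  -- |Va| ≤ (a+1) * |Comps|
  have hVaCard : Va.card ≤ (a + 1) * Comps.card := by
    have hsub : Va ⊆ Comps.biUnion
        (fun u => Finset.univ.filter (fun x => H.Reachable u x)) := by
      intro x hx
      obtain ⟨u, hu, hr⟩ := hrep x hx
      rw [Finset.mem_biUnion]
      exact ⟨u, hu, by simp only [Finset.mem_filter, Finset.mem_univ, true_and]; exact hr⟩
    calc Va.card ≤ _ := Finset.card_le_card hsub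
      _ ≤ ∑ u ∈ Comps, (Finset.univ.filter (fun x => H.Reachable u x)).card :=
        Finset.card_biUnion_le
      _ ≤ ∑ _u ∈ Comps, (a + 1) := by
        apply Finset.sum_le_sum
        intro u hu
        rw [hComps, Finset.mem_filter] at hu
        have := comp_card_le (B := B) (z := z) ht1 u
        rw [hu.2.2.2] at this
        exact this
      _ = (a + 1) * Comps.card := by rw [Finset.sum_const, smul_eq_mul, mul_comm]
  -- revealed indices of a-components
  set RevIdx : Finset (Fin t) :=
    Finset.univ.filter (fun s : Fin t => z s = true ∧ (B s).1 ∈ Va) with hRevIdx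
  have hRevCard : RevIdx.card = a * Comps.card := by
    have heq : RevIdx = Comps.biUnion (fun u =>
        Finset.univ.filter (fun s : Fin t => z s = true ∧ H.Reachable u (B s).1)) := by
      ext s
      rw [hRevIdx, Finset.mem_filter, Finset.mem_biUnion]
      constructor
      · rintro ⟨-, hzs, hmem⟩
        obtain ⟨u, hu, hr⟩ := hrep _ hmem
        exact ⟨u, hu, by
          simp only [Finset.mem_filter, Finset.mem_univ, true_and]
          exact ⟨hzs, hr⟩⟩
      · rintro ⟨u, hu, hs⟩
        simp only [Finset.mem_filter, Finset.mem_univ, true_and] at hs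
        obtain ⟨hzs, hr⟩ := hs
        rw [hComps, Finset.mem_filter] at hu
        refine ⟨Finset.mem_univ _, hzs, ?_⟩
        rw [hVa, Finset.mem_filter]
        refine ⟨Finset.mem_univ _, ⟨_, hAdjs s hzs⟩, ?_⟩
        rw [← reach_count_eq hr, hu.2.2.2]
    rw [heq, Finset.card_biUnion]
    · have : ∀ u ∈ Comps,
          (Finset.univ.filter (fun s : Fin t => z s = true ∧ H.Reachable u (B s).1)).card
            = a := by
        intro u hu
        rw [hComps, Finset.mem_filter] at hu
        have : edgeCountFrom B z u = a := hu.2.2.2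
        exact this
      rw [Finset.sum_congr rfl this, Finset.sum_const, smul_eq_mul, mul_comm]
    · intro u hu u' hu' hne
      rw [hComps, Finset.mem_coe, Finset.mem_filter] at hu hu'
      apply Finset.disjoint_left.2
      intro s hs hs'
      simp only [Finset.mem_filter, Finset.mem_univ, true_and] at hs hs'
      have hr : H.Reachable u u' := hs.2.trans hs'.2.symm
      exact hne (le_antisymm (hu.2.2.1 _ hr) (hu'.2.2.1 _ hr.symm))
  -- the image sets
  set Cand : Finset (Fin n) :=
    Finset.univ.filter (fun r : Fin n =>
      t ≤ r.val ∧ ExtEvent B z (edgeAt n ℓ π σ r) a) with hCand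
  set F : Finset (Fin n) := Finset.univ.filter (fun w => σ w ∈ Va) with hF
  set F' : Finset (Fin n) := Finset.univ.filter (fun w => σ (nxt n ℓ w) ∈ Va) with hF'
  have hFcard : F.card ≤ Va.card := by
    apply Finset.card_le_card_of_injOn (fun w => σ w)
    · intro w hw
      rw [hF, Finset.mem_coe, Finset.mem_filter] at hw
      exact hw.2
    · intro w _ w' _ h
      exact σ.injective h
  have hF'card : F'.card ≤ Va.card := by
    apply Finset.card_le_card_of_injOn (fun w => σ (nxt n ℓ w))
    · intro w hw
      rw [hF', Finset.mem_coe, Finset.mem_filter] at hw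
      exact hw.2
    · intro w _ w' _ h
      exact nxt_inj hn hl hdvd (σ.injective h)
  set D : Finset (Fin n) := Cand.image (fun r => π r) with hD
  have hDcard : D.card = Cand.card :=
    Finset.card_image_of_injective _ π.injective
  set Img : Finset (Fin n) := RevIdx.image (fun s => π (Fin.castLE ht s)) with hImg
  have hImgCard : Img.card = RevIdx.card := by
    apply Finset.card_image_of_injective
    intro s s' h
    exact Fin.castLE_injective ht (π.injective h)
  have hDsub : D ⊆ F ∪ F' := by
    intro w hw
    rw [hD, Finset.mem_image] at hw
    obtain ⟨r, hr, rfl⟩ := hw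
    rw [hCand, Finset.mem_filter] at hr
    obtain ⟨-, -, hext⟩ := hr
    have hmem : ∀ x : Fin n, (∃ w, H.Adj x w) → edgeCountFrom B z x = a → x ∈ Va := by
      intro x hx1 hx2
      rw [hVa, Finset.mem_filter]
      exact ⟨Finset.mem_univ _, hx1, hx2⟩
    rcases hext with ⟨h1, -, h2⟩ | ⟨-, h1, h2⟩ | ⟨h1, -, -, h2⟩
    · exact Finset.mem_union_left _ (Finset.mem_filter.2 ⟨Finset.mem_univ _, hmem _ h1 h2⟩)
    · exact Finset.mem_union_right _ (Finset.mem_filter.2 ⟨Finset.mem_univ _, hmem _ h1 h2⟩)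
    · exact Finset.mem_union_left _ (Finset.mem_filter.2 ⟨Finset.mem_univ _, hmem _ h1 h2⟩)
  have hImgF : Img ⊆ F := by
    intro w hw
    rw [hImg, Finset.mem_image] at hw
    obtain ⟨s, hs, rfl⟩ := hw
    rw [hRevIdx, Finset.mem_filter] at hs
    rw [hF, Finset.mem_filter]
    refine ⟨Finset.mem_univ _, ?_⟩
    have : (B s).1 = σ (π (Fin.castLE ht s)) := by rw [hBs s]
    rw [← this]
    exact hs.2.2
  have hImgF' : Img ⊆ F' := by
    intro w hw
    rw [hImg, Finset.mem_image] at hw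
    obtain ⟨s, hs, rfl⟩ := hw
    rw [hRevIdx, Finset.mem_filter] at hs
    rw [hF', Finset.mem_filter]
    refine ⟨Finset.mem_univ _, ?_⟩
    have h2 : (B s).2 = σ (nxt n ℓ (π (Fin.castLE ht s))) := by rw [hBs s]
    rw [← h2]
    exact hVaClosed _ _ hs.2.2 (hAdjs s hs.2.1).reachable
  have hdisj : Disjoint D Img := by
    apply Finset.disjoint_left.2
    intro w hwD hwI
    rw [hD, Finset.mem_image] at hwD
    rw [hImg, Finset.mem_image] at hwI
    obtain ⟨r, hr, hre⟩ := hwD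
    obtain ⟨s, _, hse⟩ := hwI
    rw [hCand, Finset.mem_filter] at hr
    have : r = Fin.castLE ht s := π.injective (hre.trans hse.symm)
    have hlt : r.val < t := by rw [this]; exact s.isLt
    omega
  -- final arithmetic
  have hUnion : (D ∪ Img).card = D.card + Img.card := Finset.card_union_of_disjoint hdisj
  have hUsub : D ∪ Img ⊆ F ∪ F' := Finset.union_subset hDsub
    (hImgF.trans Finset.subset_union_left)
  have hIsub : Img ⊆ F ∩ F' := Finset.subset_inter hImgF hImgF'
  have hsum : (F ∪ F').card + (F ∩ F').card = F.card + F'.card :=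
    Finset.card_union_add_card_inter F F'
  have hkey : Cand.card + 2 * RevIdx.card ≤ 2 * Va.card := by
    have h1 : D.card + Img.card ≤ (F ∪ F').card := by
      rw [← hUnion]; exact Finset.card_le_card hUsub
    have h2 : Img.card ≤ (F ∩ F').card := Finset.card_le_card hIsub
    omega
  rw [← hCompsCard]
  have hfin : Cand.card + 2 * (a * Comps.card) ≤ 2 * ((a + 1) * Comps.card) := by
    rw [← hRevCard]
    calc Cand.card + 2 * RevIdx.card ≤ 2 * Va.card := hkey
      _ ≤ 2 * ((a + 1) * Comps.card) := by omega
  have hexp : 2 * ((a + 1) * Comps.card) = 2 * (a * Comps.card) + 2 * Comps.card := by ring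
  show Cand.card ≤ 2 * Comps.card
  omega

end Core




/-- Extension-probability bound for `t ≤ n/8` (first claim in the proof of
Lemma 4.3 / `lm:ext-prob`): conditioned on `B_t = B`, the probability that the
edge arriving at time `t+1` extends a component of `O_t^z` of exactly `a` edges
(i.e. is incident to exactly one component of `O_t^z`, of `a` edges) is at most
`3·α[a]/n`. -/
theorem stmt10 (n ℓ : ℕ) (hn : 0 < n) (hl : 3 ≤ ℓ) (hdvd : ℓ ∣ n)
    (t : ℕ) (ht1 : 1 ≤ t) (ht : t ≤ n) (ht2 : t + 1 ≤ n) (ht8 : 8 * t ≤ n)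
    (B : Fin t → Fin n × Fin n)
    (hB : 0 < (Finset.univ.filter
        (fun p : Equiv.Perm (Fin n) × Equiv.Perm (Fin n) =>
          bPrefix n ℓ t ht p.1 p.2 = B)).card)
    (α : Multiset ℕ) (hα : ∀ i ∈ α, 0 < i)
    (z : Fin t → Bool) (hz : SimRel B z α)
    (a : ℕ) (ha : 0 < a) :
    ((Finset.univ.filter
        (fun p : Equiv.Perm (Fin n) × Equiv.Perm (Fin n) =>
          bPrefix n ℓ t ht p.1 p.2 = B ∧
          ExtEvent B z (edgeAt n ℓ p.1 p.2 ⟨t, ht2⟩) a)).card : ℝ) /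
      ((Finset.univ.filter
        (fun p : Equiv.Perm (Fin n) × Equiv.Perm (Fin n) =>
          bPrefix n ℓ t ht p.1 p.2 = B)).card : ℝ) ≤
    3 * (Multiset.count a α : ℝ) / n := by
  classical
  set tn : Fin n := ⟨t, ht2⟩ with htn
  set S := Finset.univ.filter
      (fun p : Equiv.Perm (Fin n) × Equiv.Perm (Fin n) =>
        bPrefix n ℓ t ht p.1 p.2 = B) with hS
  set Bad := Finset.univ.filter
      (fun p : Equiv.Perm (Fin n) × Equiv.Perm (Fin n) =>
        bPrefix n ℓ t ht p.1 p.2 = B ∧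
        ExtEvent B z (edgeAt n ℓ p.1 p.2 tn) a) with hBad
  set c := Multiset.count a α with hc
  have hcomp : compCount B z a = c := hz.2 a ha
  have hBadS : Bad = S.filter
      (fun p => ExtEvent B z (edgeAt n ℓ p.1 p.2 tn) a) := by
    rw [hBad, hS, Finset.filter_filter]
  have hN : 0 < S.card := hB
  -- the set of "free" positions
  set R := Finset.univ.filter (fun r : Fin n => t ≤ r.val) with hR
  have hRcard : R.card = n - t := by
    have h1 : (Finset.univ.filter (fun r : Fin n => r.val < t)) =
        Finset.univ.map (Fin.castLEEmb ht) := by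
      ext r
      simp only [Finset.mem_filter, Finset.mem_univ, true_and, Finset.mem_map,
        Fin.castLEEmb_apply]
      constructor
      · intro hr
        exact ⟨⟨r.val, hr⟩, by ext; simp⟩
      · rintro ⟨s, rfl⟩
        exact s.isLt
    have h2 : (Finset.univ.filter (fun r : Fin n => r.val < t)).card = t := by
      rw [h1, Finset.card_map, Finset.card_univ, Fintype.card_fin]
    have h3 := Finset.card_filter_add_card_filter_not
      (s := (Finset.univ : Finset (Fin n))) (p := fun r : Fin n => r.val < t)
    have h4 : R = Finset.univ.filter (fun r : Fin n => ¬ r.val < t) := by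
      ext r
      simp [hR, not_lt]
    have h5 : (Finset.univ : Finset (Fin n)).card = n := by
      rw [Finset.card_univ, Fintype.card_fin]
    rw [h4]
    omega
  -- swapping positions t and r preserves the board prefix
  have hswap : ∀ r ∈ R,
      (S.filter (fun p => ExtEvent B z (edgeAt n ℓ p.1 p.2 r) a)).card = Bad.card := by
    intro r hr
    have hrt : t ≤ r.val := by
      simpa only [hR, Finset.mem_filter, Finset.mem_univ, true_and] using hr
    have hfix : ∀ s : Fin t, Equiv.swap tn r (Fin.castLE ht s) = Fin.castLE ht s := by
      intro s
      apply Equiv.swap_apply_of_ne_of_ne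
      · intro h
        have := congrArg Fin.val h
        simp only [htn, Fin.coe_castLE] at this
        have := s.isLt
        omega
      · intro h
        have := congrArg Fin.val h
        simp only [htn, Fin.coe_castLE] at this
        have := s.isLt
        omega
    have hpre : ∀ π σ : Equiv.Perm (Fin n),
        bPrefix n ℓ t ht (π * Equiv.swap tn r) σ = bPrefix n ℓ t ht π σ := by
      intro π σ
      funext s
      show edgeAt n ℓ (π * Equiv.swap tn r) σ (Fin.castLE ht s)
          = edgeAt n ℓ π σ (Fin.castLE ht s)
      unfold edgeAt
      rw [Equiv.Perm.mul_apply, hfix s]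
    have hedge : ∀ π σ : Equiv.Perm (Fin n),
        edgeAt n ℓ (π * Equiv.swap tn r) σ tn = edgeAt n ℓ π σ r := by
      intro π σ
      unfold edgeAt
      rw [Equiv.Perm.mul_apply, Equiv.swap_apply_left]
    have hedge' : ∀ π σ : Equiv.Perm (Fin n),
        edgeAt n ℓ (π * Equiv.swap tn r) σ r = edgeAt n ℓ π σ tn := by
      intro π σ
      unfold edgeAt
      rw [Equiv.Perm.mul_apply, Equiv.swap_apply_right]
    rw [hBadS]
    apply Finset.card_nbij' (i := fun p => (p.1 * Equiv.swap tn r, p.2))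
      (j := fun p => (p.1 * Equiv.swap tn r, p.2))
    · intro p hp
      rw [Finset.mem_coe, Finset.mem_filter, hS, Finset.mem_filter] at hp
      obtain ⟨⟨-, hpB⟩, hpe⟩ := hp
      rw [Finset.mem_coe, Finset.mem_filter, hS, Finset.mem_filter]
      refine ⟨⟨Finset.mem_univ _, ?_⟩, ?_⟩
      · rw [hpre p.1 p.2]; exact hpB
      · show ExtEvent B z (edgeAt n ℓ (p.1 * Equiv.swap tn r) p.2 tn) a
        rw [hedge p.1 p.2]
        exact hpe
    · intro p hp
      rw [Finset.mem_coe, Finset.mem_filter, hS, Finset.mem_filter] at hp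
      obtain ⟨⟨-, hpB⟩, hpe⟩ := hp
      rw [Finset.mem_coe, Finset.mem_filter, hS, Finset.mem_filter]
      refine ⟨⟨Finset.mem_univ _, ?_⟩, ?_⟩
      · rw [hpre p.1 p.2]; exact hpB
      · show ExtEvent B z (edgeAt n ℓ (p.1 * Equiv.swap tn r) p.2 r) a
        rw [hedge' p.1 p.2]
        exact hpe
    · intro p _
      refine Prod.ext ?_ rfl
      show p.1 * Equiv.swap tn r * Equiv.swap tn r = p.1
      rw [mul_assoc, Equiv.swap_mul_self, mul_one]
    · intro p _
      refine Prod.ext ?_ rfl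
      show p.1 * Equiv.swap tn r * Equiv.swap tn r = p.1
      rw [mul_assoc, Equiv.swap_mul_self, mul_one]
  -- double counting
  have hdc : Bad.card * (n - t) ≤ S.card * (2 * c) := by
    have h1 : ∑ r ∈ R,
        (S.filter (fun p => ExtEvent B z (edgeAt n ℓ p.1 p.2 r) a)).card
          = Bad.card * R.card := by
      rw [Finset.sum_congr rfl hswap, Finset.sum_const, smul_eq_mul, mul_comm]
    have h2 : ∑ r ∈ R,
        (S.filter (fun p => ExtEvent B z (edgeAt n ℓ p.1 p.2 r) a)).card
          = ∑ p ∈ S, (R.filter (fun r => ExtEvent B z (edgeAt n ℓ p.1 p.2 r) a)).card := by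
      simp only [Finset.card_filter]
      exact Finset.sum_comm
    have h3 : ∀ p ∈ S,
        (R.filter (fun r => ExtEvent B z (edgeAt n ℓ p.1 p.2 r) a)).card ≤ 2 * c := by
      intro p hp
      rw [hS, Finset.mem_filter] at hp
      have hcore := core_bound n ℓ hn hl hdvd t ht1 ht B z a ha p.1 p.2 hp.2
      rw [hcomp] at hcore
      have heq : R.filter (fun r => ExtEvent B z (edgeAt n ℓ p.1 p.2 r) a)
          = Finset.univ.filter (fun r : Fin n =>
              t ≤ r.val ∧ ExtEvent B z (edgeAt n ℓ p.1 p.2 r) a) := by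
        rw [hR, Finset.filter_filter]
      rw [heq]
      exact hcore
    calc Bad.card * (n - t) = Bad.card * R.card := by rw [hRcard]
      _ = ∑ r ∈ R,
          (S.filter (fun p => ExtEvent B z (edgeAt n ℓ p.1 p.2 r) a)).card := h1.symm
      _ = ∑ p ∈ S, (R.filter (fun r => ExtEvent B z (edgeAt n ℓ p.1 p.2 r) a)).card := h2
      _ ≤ ∑ _p ∈ S, 2 * c := Finset.sum_le_sum h3
      _ = S.card * (2 * c) := by rw [Finset.sum_const, smul_eq_mul]
  -- conclude
  have hMn : Bad.card * n ≤ 3 * c * S.card := by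
    have h5 : 2 * n ≤ 3 * (n - t) := by omega
    have hchain : 2 * (Bad.card * n) ≤ 2 * (3 * c * S.card) := by
      calc 2 * (Bad.card * n) = Bad.card * (2 * n) := by ring
        _ ≤ Bad.card * (3 * (n - t)) := Nat.mul_le_mul_left _ h5
        _ = 3 * (Bad.card * (n - t)) := by ring
        _ ≤ 3 * (S.card * (2 * c)) := Nat.mul_le_mul_left _ hdc
        _ = 2 * (3 * c * S.card) := by ring
    exact Nat.le_of_mul_le_mul_left hchain (by norm_num)
  have hnR : (0 : ℝ) < (n : ℝ) := by exact_mod_cast hn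
  have hSR : (0 : ℝ) < (S.card : ℝ) := by exact_mod_cast hN
  rw [div_le_div_iff₀ hSR hnR]
  have : ((Bad.card * n : ℕ) : ℝ) ≤ ((3 * c * S.card : ℕ) : ℝ) := by exact_mod_cast hMn
  push_cast at this
  linarith
end
end

section
/- Let G be a graph with edge set E, let ℬ be a partition of E into nonempty sets (batches), let v be a vertex of G, and let h, a be natural numbers. For a subset ℋ ⊆ ℬ, the v-boundary of ℋ is the set of batches B ∈ ℬ \ ℋ containing at least one edge that has an endpoint connected to v by a (possibly empty) path of edges of ⋃ℋ. Then the number of h-element subsets ℋ ⊆ ℬ such that (1) every batch in ℋ contains an edge e with an endpoint connected to v by a (possibly empty) path of edges of ⋃ℋ, and (2) the v-boundary of ℋ contains exactly a batches, is at most the binomial coefficient C(h+a, a). -/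
open scoped Classical

noncomputable section

/-- Reachability from `u` to `w` by a (possibly empty) walk all of whose edges
satisfy `ok`.  Edges are abstract (multigraph with self-loops allowed), with
endpoints given by `ends`. -/
def ReachBy {V E : Type} (ends : E → V × V) (ok : E → Prop) : V → V → Prop :=
  Relation.ReflTransGen (fun u w => ∃ e, ok e ∧
    (((ends e).1 = u ∧ (ends e).2 = w) ∨ ((ends e).1 = w ∧ (ends e).2 = u)))

set_option linter.unusedSectionVars false

section Aux
variable {V E B : Type} [Fintype E] [Fintype B] [LinearOrder B]
variable (ends : E → V × V) (batch : E → B) (v : V)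

lemma reachBy_mono {ok ok' : E → Prop} (hok : ∀ e, ok e → ok' e) {u w : V}
    (hr : ReachBy ends ok u w) : ReachBy ends ok' u w := by
  induction hr with
  | refl => exact Relation.ReflTransGen.refl
  | tail _ hstep ih =>
    obtain ⟨e, he, hor⟩ := hstep
    exact ih.tail ⟨e, hok e he, hor⟩

def adjTo (S : Finset B) (b : B) : Prop :=
  ∃ e : E, batch e = b ∧
    (ReachBy ends (fun e' => batch e' ∈ S) v (ends e).1 ∨
     ReachBy ends (fun e' => batch e' ∈ S) v (ends e).2)

lemma adjTo_mono {S S' : Finset B} (hSS : S ⊆ S') {b : B}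
    (hb : adjTo ends batch v S b) : adjTo ends batch v S' b := by
  obtain ⟨e, he, hor⟩ := hb
  exact ⟨e, he, hor.imp (reachBy_mono ends fun e' h => hSS h)
    (reachBy_mono ends fun e' h => hSS h)⟩

def front (S Q : Finset B) : Finset B :=
  Finset.univ.filter (fun b => b ∉ Q ∧ adjTo ends batch v S b)

def expQ (H : Finset B) : ℕ → Finset B
  | 0 => ∅
  | n+1 =>
    let Q := expQ H n
    if hne : (front ends batch v (Q ∩ H) Q).Nonempty
    then insert ((front ends batch v (Q ∩ H) Q).min' hne) Q
    else Q

lemma reach_split (H Q : Finset B) {w : V}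
    (hr : ReachBy ends (fun e => batch e ∈ H) v w) :
    ReachBy ends (fun e => batch e ∈ Q ∩ H) v w ∨
    ∃ e : E, batch e ∈ H ∧ batch e ∉ Q ∧
      (ReachBy ends (fun e' => batch e' ∈ Q ∩ H) v (ends e).1 ∨
       ReachBy ends (fun e' => batch e' ∈ Q ∩ H) v (ends e).2) := by
  induction hr with
  | refl => exact Or.inl Relation.ReflTransGen.refl
  | tail hpre hstep ih =>
    obtain ⟨e, heH, hor⟩ := hstep
    rcases ih with hreach | hbad
    · by_cases heQ : batch e ∈ Q
      · exact Or.inl (hreach.tail ⟨e, Finset.mem_inter.mpr ⟨heQ, heH⟩, hor⟩)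
      · refine Or.inr ⟨e, heH, heQ, ?_⟩
        rcases hor with ⟨h1, _⟩ | ⟨_, h2⟩
        · exact Or.inl (by rw [h1]; exact hreach)
        · exact Or.inr (by rw [h2]; exact hreach)
    · exact Or.inr hbad

lemma front_nonempty (H Q : Finset B) {b0 : B} (hb0 : b0 ∉ Q)
    (hadj : adjTo ends batch v H b0) :
    (front ends batch v (Q ∩ H) Q).Nonempty := by
  obtain ⟨e, hbe, hor⟩ := hadj
  have key : ∀ {w : V}, ReachBy ends (fun e' => batch e' ∈ H) v w →
      (∃ e2 : E, batch e2 = b0 ∧ w = (ends e2).1 ∨ batch e2 = b0 ∧ w = (ends e2).2) →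
      (front ends batch v (Q ∩ H) Q).Nonempty := by
    intro w hr hw
    rcases reach_split ends batch v H Q hr with hre | ⟨e', h1, h2, h3⟩
    · obtain ⟨e2, he2⟩ := hw
      refine ⟨b0, ?_⟩
      simp only [front, Finset.mem_filter, Finset.mem_univ, true_and]
      refine ⟨hb0, ⟨e2, ?_⟩⟩
      rcases he2 with ⟨hb, hw1⟩ | ⟨hb, hw2⟩
      · exact ⟨hb, Or.inl (hw1 ▸ hre)⟩
      · exact ⟨hb, Or.inr (hw2 ▸ hre)⟩
    · refine ⟨batch e', ?_⟩
      simp only [front, Finset.mem_filter, Finset.mem_univ, true_and]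
      exact ⟨h2, ⟨e', rfl, h3⟩⟩
  rcases hor with hr | hr
  · exact key hr ⟨e, Or.inl ⟨hbe, rfl⟩⟩
  · exact key hr ⟨e, Or.inr ⟨hbe, rfl⟩⟩

/-- the set of all batches adjacent to v via H -/
def TT (H : Finset B) : Finset B := Finset.univ.filter (adjTo ends batch v H)

lemma expQ_subset_T (H : Finset B) : ∀ n, expQ ends batch v H n ⊆ TT ends batch v H := by
  intro n
  induction n with
  | zero => simp [expQ]
  | succ n ih =>
    rw [expQ]
    split_ifs with hne
    · intro b hb
      rcases Finset.mem_insert.mp hb with hb | hb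
      · have := (front ends batch v _ _).min'_mem hne
        rw [← hb] at this
        simp only [front, Finset.mem_filter, Finset.mem_univ, true_and] at this
        simp only [TT, Finset.mem_filter, Finset.mem_univ, true_and]
        exact adjTo_mono ends batch v Finset.inter_subset_right this.2
      · exact ih hb
    · exact ih

lemma expQ_mono (H : Finset B) (n : ℕ) : expQ ends batch v H n ⊆ expQ ends batch v H (n+1) := by
  rw [expQ]
  split_ifs with hne
  · exact Finset.subset_insert _ _
  · exact subset_rfl

lemma expQ_card (H : Finset B) : ∀ n, n ≤ (TT ends batch v H).card →
    (expQ ends batch v H n).card = n := by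
  intro n
  induction n with
  | zero => simp [expQ]
  | succ n ih =>
    intro hn
    have hcard : (expQ ends batch v H n).card = n := ih (le_of_lt (Nat.lt_of_succ_le hn))
    have hlt : (expQ ends batch v H n).card < (TT ends batch v H).card := by omega
    have hsub := expQ_subset_T ends batch v H n
    have hne : expQ ends batch v H n ≠ TT ends batch v H := by
      intro hEq; rw [hEq] at hcard; omega
    obtain ⟨b0, hb0T, hb0Q⟩ := Finset.exists_of_ssubset (hsub.ssubset_of_ne hne)
    simp only [TT, Finset.mem_filter, Finset.mem_univ, true_and] at hb0T
    have hfne := front_nonempty ends batch v H (expQ ends batch v H n) hb0Q hb0T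
    rw [expQ, dif_pos hfne]
    have hmem := (front ends batch v (expQ ends batch v H n ∩ H) (expQ ends batch v H n)).min'_mem hfne
    have hnm := (Finset.mem_filter.mp hmem).2.1
    rw [Finset.card_insert_of_notMem hnm, hcard]

lemma expQ_eq_T (H : Finset B) :
    expQ ends batch v H (TT ends batch v H).card = TT ends batch v H :=
  Finset.eq_of_subset_of_card_le (expQ_subset_T ends batch v H _)
    (le_of_eq (expQ_card ends batch v H _ le_rfl).symm)

lemma expQ_mono' (H : Finset B) {m n : ℕ} (hmn : m ≤ n) :
    expQ ends batch v H m ⊆ expQ ends batch v H n := by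
  induction n with
  | zero => simp_all
  | succ n ih =>
    rcases Nat.lt_or_ge m (n+1) with hlt | hge
    · exact (ih (by omega)).trans (expQ_mono ends batch v H n)
    · have : m = n+1 := by omega
      subst this; exact subset_rfl

lemma diff_singleton (H : Finset B) (n : ℕ)
    (hne : (front ends batch v (expQ ends batch v H n ∩ H) (expQ ends batch v H n)).Nonempty) :
    expQ ends batch v H (n+1) \ expQ ends batch v H n =
      {(front ends batch v (expQ ends batch v H n ∩ H) (expQ ends batch v H n)).min' hne} := by
  have hmem := (front ends batch v (expQ ends batch v H n ∩ H) (expQ ends batch v H n)).min'_mem hne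
  have hnm := (Finset.mem_filter.mp hmem).2.1
  rw [expQ, dif_pos hne]
  ext x
  simp only [Finset.mem_sdiff, Finset.mem_insert, Finset.mem_singleton]
  constructor
  · rintro ⟨hx | hx, hxq⟩
    · exact hx
    · exact absurd hx hxq
  · rintro rfl
    exact ⟨Or.inl rfl, hnm⟩

lemma inj_aux (H H' : Finset B) (N : ℕ)
    (hcode : ∀ n < N,
      (((expQ ends batch v H (n+1) \ expQ ends batch v H n) ∩ H).Nonempty ↔
       ((expQ ends batch v H' (n+1) \ expQ ends batch v H' n) ∩ H').Nonempty)) :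
    ∀ n ≤ N, expQ ends batch v H n = expQ ends batch v H' n ∧
      expQ ends batch v H n ∩ H = expQ ends batch v H' n ∩ H' := by
  intro n
  induction n with
  | zero => intro _; constructor <;> simp [expQ]
  | succ n ih =>
    intro hn
    obtain ⟨hQ, hS⟩ := ih (by omega)
    have hS' : expQ ends batch v H n ∩ H = expQ ends batch v H n ∩ H' := by
      rw [hS, hQ]
    have hfe : front ends batch v (expQ ends batch v H n ∩ H) (expQ ends batch v H n) =
        front ends batch v (expQ ends batch v H' n ∩ H') (expQ ends batch v H' n) := by
      rw [← hQ, ← hS']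
    by_cases hne : (front ends batch v (expQ ends batch v H n ∩ H) (expQ ends batch v H n)).Nonempty
    · have hne' : (front ends batch v (expQ ends batch v H' n ∩ H') (expQ ends batch v H' n)).Nonempty := by rw [← hfe]; exact hne
      have hb : (front ends batch v (expQ ends batch v H n ∩ H) (expQ ends batch v H n)).min' hne
          = (front ends batch v (expQ ends batch v H' n ∩ H') (expQ ends batch v H' n)).min' hne' := by
        congr 1
      set b := (front ends batch v (expQ ends batch v H n ∩ H) (expQ ends batch v H n)).min' hne with hbdef
      have hQ1 : expQ ends batch v H (n+1) = insert b (expQ ends batch v H n) := by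
        rw [expQ, dif_pos hne]
      have hQ1' : expQ ends batch v H' (n+1) = insert b (expQ ends batch v H' n) := by
        rw [expQ, dif_pos hne', ← hb]
      have hQeq : expQ ends batch v H (n+1) = expQ ends batch v H' (n+1) := by
        rw [hQ1, hQ1', hQ]
      refine ⟨hQeq, ?_⟩
      have hd1 : expQ ends batch v H (n+1) \ expQ ends batch v H n = {b} :=
        diff_singleton ends batch v H n hne
      have hd2 : expQ ends batch v H' (n+1) \ expQ ends batch v H' n = {b} := by
        have := diff_singleton ends batch v H' n hne'
        rw [this, ← hb]
      have hbH : b ∈ H ↔ b ∈ H' := by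
        have := hcode n (by omega)
        rw [hd1, hd2] at this
        constructor
        · intro hb1
          obtain ⟨x, hx⟩ := this.mp ⟨b, by simp [hb1]⟩
          simp only [Finset.mem_inter, Finset.mem_singleton] at hx
          exact hx.1 ▸ hx.2
        · intro hb1
          obtain ⟨x, hx⟩ := this.mpr ⟨b, by simp [hb1]⟩
          simp only [Finset.mem_inter, Finset.mem_singleton] at hx
          exact hx.1 ▸ hx.2
      rw [hQ1, hQ1']
      by_cases hbmem : b ∈ H
      · rw [Finset.insert_inter_of_mem hbmem,
          Finset.insert_inter_of_mem (hbH.mp hbmem), hS]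
      · rw [Finset.insert_inter_of_notMem hbmem,
          Finset.insert_inter_of_notMem (fun hc => hbmem (hbH.mpr hc)), hS]
    · have hne' : ¬ (front ends batch v (expQ ends batch v H' n ∩ H') (expQ ends batch v H' n)).Nonempty := by rw [← hfe]; exact hne
      rw [expQ, dif_neg hne, expQ, dif_neg hne']
      exact ⟨hQ, hS⟩


lemma code_card (H : Finset B) (h1 : ∀ b ∈ H, adjTo ends batch v H b)
    (N : ℕ) (hT : (TT ends batch v H).card = N) :
    ((Finset.univ : Finset (Fin N)).filter
      (fun i => ((expQ ends batch v H (i.1+1) \ expQ ends batch v H i.1) ∩ H).Nonempty)).card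
      = H.card := by
  have hexpN : expQ ends batch v H N = TT ends batch v H := by
    rw [← hT]; exact expQ_eq_T ends batch v H
  have hdiff_one : ∀ i : Fin N,
      ((expQ ends batch v H (i.1+1) \ expQ ends batch v H i.1)).card = 1 := by
    intro i
    rw [Finset.card_sdiff_of_subset (expQ_mono ends batch v H i.1),
      expQ_card ends batch v H (i.1+1) (by rw [hT]; omega),
      expQ_card ends batch v H i.1 (by rw [hT]; omega)]
    omega
  refine Finset.card_bij (fun i hi => ((Finset.mem_filter.mp hi).2).choose) ?_ ?_ ?_
  · intro i hi
    have hspec := ((Finset.mem_filter.mp hi).2).choose_spec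
    exact (Finset.mem_inter.mp hspec).2
  · have key : ∀ (i j : ℕ)
        (pi : ((expQ ends batch v H (i+1) \ expQ ends batch v H i) ∩ H).Nonempty)
        (pj : ((expQ ends batch v H (j+1) \ expQ ends batch v H j) ∩ H).Nonempty),
        i < j → pi.choose ≠ pj.choose := by
      intro i j pi pj hij hEq
      have hi2 := pi.choose_spec
      have hj2 := pj.choose_spec
      rw [Finset.mem_inter, Finset.mem_sdiff] at hi2 hj2
      have : pi.choose ∈ expQ ends batch v H j :=
        expQ_mono' ends batch v H (by omega) hi2.1.1
      rw [hEq] at this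
      exact hj2.1.2 this
    intro i hi j hj hEq
    rcases lt_trichotomy i.1 j.1 with hlt | heq | hlt
    · exact absurd hEq (key i.1 j.1 _ _ hlt)
    · exact Fin.ext heq
    · exact absurd hEq.symm (key j.1 i.1 _ _ hlt)
  · intro b hb
    have hbT : b ∈ expQ ends batch v H N := by
      rw [hexpN]
      simp only [TT, Finset.mem_filter, Finset.mem_univ, true_and]
      exact h1 b hb
    have hP : ∃ n, b ∈ expQ ends batch v H n := ⟨N, hbT⟩
    set n0 := Nat.find hP with hn0
    have hn0mem : b ∈ expQ ends batch v H n0 := Nat.find_spec hP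
    have hn0le : n0 ≤ N := Nat.find_le hbT
    have hn0pos : 0 < n0 := by
      rcases Nat.eq_zero_or_pos n0 with h0 | h0
      · rw [h0] at hn0mem; simp [expQ] at hn0mem
      · exact h0
    have hnotmem : b ∉ expQ ends batch v H (n0 - 1) :=
      Nat.find_min hP (by omega)
    have hiN : n0 - 1 < N := by omega
    have hbdiff : b ∈ (expQ ends batch v H ((n0-1)+1) \ expQ ends batch v H (n0-1)) ∩ H := by
      rw [Finset.mem_inter, Finset.mem_sdiff]
      have : (n0 - 1) + 1 = n0 := by omega
      rw [this]
      exact ⟨⟨hn0mem, hnotmem⟩, hb⟩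
    have hi : (⟨n0 - 1, hiN⟩ : Fin N) ∈ (Finset.univ : Finset (Fin N)).filter
        (fun i => ((expQ ends batch v H (i.1+1) \ expQ ends batch v H i.1) ∩ H).Nonempty) := by
      rw [Finset.mem_filter]
      exact ⟨Finset.mem_univ _, ⟨b, hbdiff⟩⟩
    refine ⟨⟨n0 - 1, hiN⟩, hi, ?_⟩
    have hspec := ((Finset.mem_filter.mp hi).2).choose_spec
    have hone := hdiff_one ⟨n0 - 1, hiN⟩
    have hle1 := Finset.card_le_one.mp (le_of_eq hone)
    exact hle1 _ (Finset.mem_inter.mp hspec).1 _ (Finset.mem_inter.mp hbdiff).1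

lemma bound (h a : ℕ) (S : Finset (Finset B))
    (hS : ∀ H ∈ S, (∀ b ∈ H, adjTo ends batch v H b) ∧
      (TT ends batch v H).card = h + a ∧ H ⊆ TT ends batch v H ∧ H.card = h) :
    S.card ≤ (h + a).choose a := by
  refine le_trans (Finset.card_le_card_of_injOn
    (t := Finset.powersetCard h (Finset.univ : Finset (Fin (h+a))))
    (fun H : Finset B => (Finset.univ : Finset (Fin (h+a))).filter
      (fun i => ((expQ ends batch v H (i.1+1) \ expQ ends batch v H i.1) ∩ H).Nonempty))
    ?_ ?_) ?_
  · intro H hH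
    obtain ⟨h1, hT, hsub, hch⟩ := hS H hH
    rw [Finset.mem_coe, Finset.mem_powersetCard]
    exact ⟨Finset.subset_univ _, by rw [code_card ends batch v H h1 (h+a) hT, hch]⟩
  · intro H hH H' hH' hEq
    obtain ⟨h1, hT, hsub, hch⟩ := hS H (Finset.mem_coe.mp hH)
    obtain ⟨h1', hT', hsub', hch'⟩ := hS H' (Finset.mem_coe.mp hH')
    have hcode : ∀ n < h + a,
        (((expQ ends batch v H (n+1) \ expQ ends batch v H n) ∩ H).Nonempty ↔
         ((expQ ends batch v H' (n+1) \ expQ ends batch v H' n) ∩ H').Nonempty) := by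
      intro n hn
      have := Finset.ext_iff.mp hEq ⟨n, hn⟩
      simpa only [Finset.mem_filter, Finset.mem_univ, true_and] using this
    have hfin := (inj_aux ends batch v H H' (h+a) hcode (h+a) le_rfl).2
    have e1 : expQ ends batch v H (h+a) = TT ends batch v H := by
      rw [← hT]; exact expQ_eq_T ends batch v H
    have e2 : expQ ends batch v H' (h+a) = TT ends batch v H' := by
      rw [← hT']; exact expQ_eq_T ends batch v H'
    rw [e1, e2, Finset.inter_eq_right.mpr hsub, Finset.inter_eq_right.mpr hsub'] at hfin
    exact hfin
  · rw [Finset.card_powersetCard, Finset.card_univ, Fintype.card_fin]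
    have : (h + a).choose h = (h + a).choose a := by
      rw [← Nat.choose_symm (Nat.le_add_left a h)]
      congr 1
      omega
    exact le_of_eq this

end Aux

/-- Lemma 6.13 (`lm:boundary`): let the edges `E` of a (multi)graph be partitioned
into nonempty batches (fibers of the surjection `batch : E → B`), and fix a vertex
`v`.  The number of `h`-element sets `ℋ` of batches such that (1) every batch of
`ℋ` contains an edge with an endpoint connected to `v` by a path of edges of `⋃ℋ`,
and (2) the `v`-boundary of `ℋ` (batches outside `ℋ` containing an edge with an
endpoint connected to `v` by a path of edges of `⋃ℋ`) has exactly `a` batches,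
is at most `C(h+a, a)`. -/
theorem stmt15 (V E B : Type) [Fintype V] [Fintype E] [Fintype B]
    (ends : E → V × V) (batch : E → B) (hsurj : Function.Surjective batch)
    (v : V) (h a : ℕ) :
    (Finset.univ.filter (fun H : Finset B =>
        H.card = h ∧
        (∀ b ∈ H, ∃ e : E, batch e = b ∧
          (ReachBy ends (fun e' => batch e' ∈ H) v (ends e).1 ∨
            ReachBy ends (fun e' => batch e' ∈ H) v (ends e).2)) ∧
        (Finset.univ.filter (fun b : B =>
            b ∉ H ∧ ∃ e : E, batch e = b ∧
              (ReachBy ends (fun e' => batch e' ∈ H) v (ends e).1 ∨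
                ReachBy ends (fun e' => batch e' ∈ H) v (ends e).2))).card = a)).card
      ≤ (h + a).choose a := by
  have lo : LinearOrder B := LinearOrder.lift' (Fintype.equivFin B) (Fintype.equivFin B).injective
  refine @bound V E B _ _ lo ends batch v h a _ ?_
  intro H hH
  rw [Finset.filter_congr_decidable] at hH
  obtain ⟨_, hch, h1, h2⟩ := Finset.mem_filter.mp hH
  rw [Finset.filter_congr_decidable] at h2
  have hsub : H ⊆ TT ends batch v H := by
    intro b hb
    simp only [TT, Finset.mem_filter, Finset.mem_univ, true_and]
    exact h1 b hb
  have hTeq : TT ends batch v H =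
      H ∪ Finset.univ.filter (fun b : B =>
          b ∉ H ∧ ∃ e : E, batch e = b ∧
            (ReachBy ends (fun e' => batch e' ∈ H) v (ends e).1 ∨
              ReachBy ends (fun e' => batch e' ∈ H) v (ends e).2)) := by
    ext b
    simp only [TT, Finset.mem_filter, Finset.mem_univ, true_and, Finset.mem_union]
    constructor
    · intro hadj
      by_cases hbH : b ∈ H
      · exact Or.inl hbH
      · exact Or.inr ⟨hbH, hadj⟩
    · rintro (hbH | ⟨_, hadj⟩)
      · exact h1 b hbH
      · exact hadj
  have hdisj : Disjoint H (Finset.univ.filter (fun b : B =>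
          b ∉ H ∧ ∃ e : E, batch e = b ∧
            (ReachBy ends (fun e' => batch e' ∈ H) v (ends e).1 ∨
              ReachBy ends (fun e' => batch e' ∈ H) v (ends e).2))) := by
    rw [Finset.disjoint_left]
    intro b hb hb2
    exact (Finset.mem_filter.mp hb2).2.1 hb
  refine ⟨h1, ?_, hsub, hch⟩
  rw [hTeq, Finset.card_union_of_disjoint hdisj, hch, h2]
end
end

section
/- Let G be a graph on a vertex set V of n vertices, let c(G) denote the number of connected components of G, and for v ∈ V let c_v denote the number of vertices of the connected component of G containing v. Let k and r be positive integers, and let v_1, …, v_r be independently and uniformly sampled (with replacement) from V. Then with probability at least 1 − k²/r over the choice of the samples, |c(G) − (n/r)·∑_{i=1}^r (1/c_{v_i})·1[c_{v_i} ≤ k]| < 2n/k. -/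
open scoped Classical

noncomputable section

open Finset
private lemma aux_cons_sum {α : Type*} [Fintype α] (r : ℕ) (h : α → ℝ) (a : α) (vs : Fin r → α) :
    ∑ i : Fin (r+1), h ((Fin.cons a vs : Fin (r+1) → α) i) = h a + ∑ i : Fin r, h (vs i) := by
  have : ∀ i : Fin (r+1), h ((Fin.cons a vs : Fin (r+1) → α) i)
      = (Fin.cons (h a) (h ∘ vs) : Fin (r+1) → ℝ) i := by
    intro i
    rw [← Fin.comp_cons h a vs]; rfl
  simp only [this, Fin.sum_cons]; rfl

private lemma aux_pow_succ {α : Type*} [Fintype α] (r : ℕ) :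
    (Fintype.card α : ℝ) * ((r:ℝ) * (Fintype.card α)^(r-1)) = r * (Fintype.card α)^r := by
  rcases Nat.eq_zero_or_pos r with hr | hr
  · subst hr; simp
  · have : (Fintype.card α : ℝ)^r = (Fintype.card α)^(r-1) * Fintype.card α := by
      rw [← pow_succ, Nat.sub_add_cancel hr]
    rw [this]; ring

private lemma aux_lin_sum {α : Type*} [Fintype α] (r : ℕ) (h : α → ℝ) :
    ∑ vs : Fin r → α, (∑ i, h (vs i))
      = r * (Fintype.card α)^(r-1) * ∑ a, h a := by
  induction r with
  | zero => simp
  | succ r ih =>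
    rw [← Equiv.sum_comp (Fin.consEquiv (fun _ : Fin (r+1) => α))
      (fun vs => ∑ i, h (vs i))]
    rw [Fintype.sum_prod_type]
    have key : ∀ (a : α) (vs : Fin r → α),
        ∑ i : Fin (r+1), h ((Fin.consEquiv (fun _ : Fin (r+1) => α)) (a, vs) i)
          = h a + ∑ i : Fin r, h (vs i) := by
      intro a vs
      exact aux_cons_sum r h a vs
    simp only [key, Finset.sum_add_distrib, Finset.sum_const, nsmul_eq_mul, ih,
      Finset.card_univ, Fintype.card_fun, Fintype.card_fin]
    rw [← Finset.mul_sum]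
    have hps := aux_pow_succ (α := α) r
    push_cast at hps ⊢
    linear_combination (∑ a : α, h a) * hps

private lemma aux_sq_sum {α : Type*} [Fintype α] (r : ℕ) (h : α → ℝ) (h0 : ∑ a, h a = 0) :
    ∑ vs : Fin r → α, (∑ i, h (vs i))^2
      = r * (Fintype.card α)^(r-1) * ∑ a, (h a)^2 := by
  induction r with
  | zero => simp
  | succ r ih =>
    rw [← Equiv.sum_comp (Fin.consEquiv (fun _ : Fin (r+1) => α))
      (fun vs => (∑ i, h (vs i))^2)]
    rw [Fintype.sum_prod_type]
    have key : ∀ (a : α) (vs : Fin r → α),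
        (∑ i : Fin (r+1), h ((Fin.consEquiv (fun _ : Fin (r+1) => α)) (a, vs) i))^2
          = (h a)^2 + 2 * h a * (∑ i : Fin r, h (vs i)) + (∑ i : Fin r, h (vs i))^2 := by
      intro a vs
      simp only [Fin.consEquiv_apply]
      rw [show (Fin.cons a vs : Fin (r+1) → α) = Fin.cons a vs from rfl, aux_cons_sum r h a vs]; ring
    simp only [key, Finset.sum_add_distrib, Finset.sum_const, nsmul_eq_mul, ih,
      Finset.card_univ, Fintype.card_fun, Fintype.card_fin]
    have hsum2 : ∀ a : α, ∑ vs : Fin r → α, 2 * h a * (∑ i : Fin r, h (vs i))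
        = 2 * h a * ∑ vs : Fin r → α, (∑ i : Fin r, h (vs i)) := by
      intro a; rw [Finset.mul_sum]
    simp only [hsum2, aux_lin_sum, h0, mul_zero, add_zero, Finset.sum_const,
      Finset.card_univ, nsmul_eq_mul]
    rw [← Finset.mul_sum]
    have hps := aux_pow_succ (α := α) r
    push_cast at hps ⊢
    linear_combination (∑ a : α, (h a)^2) * hps


set_option maxHeartbeats 2000000 in
/-- Lemma 6.14 (`lm:csample`): for a graph `G` on `n` vertices, sampling `r`
vertices `v_1, …, v_r` independently and uniformly, with probability at least
`1 - k²/r` the estimator `(n/r) ∑_i (1/c_{v_i})·1[c_{v_i} ≤ k]` is within `2n/k`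
of the number `c(G)` of connected components, where `c_v` is the number of
vertices in the connected component containing `v`. -/
theorem stmt16 (n : ℕ) (hn : 0 < n) (G : SimpleGraph (Fin n))
    (k r : ℕ) (hk : 0 < k) (hr : 0 < r) :
    1 - (k : ℝ) ^ 2 / r ≤
      ((Finset.univ.filter (fun vs : Fin r → Fin n =>
          |(Fintype.card G.ConnectedComponent : ℝ) -
              (n : ℝ) / r * ∑ i : Fin r,
                (if (Finset.univ.filter
                      (fun w : Fin n => G.Reachable (vs i) w)).card ≤ k then
                  (1 : ℝ) / (Finset.univ.filter
                      (fun w : Fin n => G.Reachable (vs i) w)).card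
                else 0)| < 2 * n / k)).card : ℝ) /
        (Fintype.card (Fin r → Fin n) : ℝ) := by
  classical
  set cv : Fin n → ℕ := fun v => (Finset.univ.filter (fun w : Fin n => G.Reachable v w)).card
    with hcv
  set f : Fin n → ℝ := fun v => if cv v ≤ k then (1:ℝ)/(cv v) else 0 with hf
  have hnR : (0:ℝ) < n := by exact_mod_cast hn
  have hrR : (0:ℝ) < r := by exact_mod_cast hr
  have hkR : (0:ℝ) < k := by exact_mod_cast hk
  have cv_pos : ∀ v, 0 < cv v := by
    intro v
    apply Finset.card_pos.mpr
    exact ⟨v, by simp [SimpleGraph.Reachable.refl]⟩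
  have cv_posR : ∀ v, (0:ℝ) < cv v := fun v => by exact_mod_cast cv_pos v
  have f_nonneg : ∀ v, 0 ≤ f v := by
    intro v; rw [hf]; dsimp only; split
    · positivity
    · exact le_refl 0
  have f_le_one : ∀ v, f v ≤ 1 := by
    intro v; rw [hf]; dsimp only; split
    · rw [div_le_one (cv_posR v)]
      exact_mod_cast cv_pos v
    · norm_num
  set S : ℝ := ∑ v, f v with hS
  have hS_nonneg : 0 ≤ S := Finset.sum_nonneg (fun v _ => f_nonneg v)
  have hS_le : S ≤ n := by
    calc S ≤ ∑ _v : Fin n, (1:ℝ) := Finset.sum_le_sum (fun v _ => f_le_one v)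
    _ = n := by simp
  set μ : ℝ := S / n with hμ
  have hnμ : (n:ℝ) * μ = S := by rw [hμ]; field_simp
  have hμ0 : 0 ≤ μ := div_nonneg hS_nonneg hnR.le
  have hμ1 : μ ≤ 1 := by rw [hμ, div_le_one hnR]; exact hS_le
  set c : ℝ := (Fintype.card G.ConnectedComponent : ℝ) with hcdef
  -- component count identity
  have comp_eq : c = ∑ v, (1:ℝ)/(cv v) := by
    rw [← Finset.sum_fiberwise (Finset.univ : Finset (Fin n))
      (fun v => G.connectedComponentMk v) (fun v => (1:ℝ)/(cv v))]
    rw [hcdef]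
    rw [show (Fintype.card G.ConnectedComponent : ℝ)
        = ∑ _comp : G.ConnectedComponent, (1:ℝ) by simp]
    refine Finset.sum_congr rfl (fun comp _ => ?_)
    set F := Finset.univ.filter (fun v => G.connectedComponentMk v = comp) with hF
    have hfib : ∀ v ∈ F, cv v = F.card := by
      intro v hv
      rw [Finset.mem_filter] at hv
      rw [hcv]; dsimp only
      congr 1
      ext w
      simp only [Finset.mem_filter, Finset.mem_univ, true_and, hF]
      rw [← SimpleGraph.ConnectedComponent.eq, hv.2, eq_comm]
    have hne : F.Nonempty := by
      obtain ⟨v0, hv0⟩ := comp.exists_rep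
      refine ⟨v0, ?_⟩
      simp only [hF, Finset.mem_filter, Finset.mem_univ, true_and]
      exact hv0
    have hFc : (0:ℝ) < F.card := by exact_mod_cast Finset.card_pos.mpr hne
    calc (1:ℝ) = F.card * (1/(F.card:ℝ)) := by field_simp
    _ = ∑ v ∈ F, (1:ℝ)/(F.card:ℝ) := by rw [Finset.sum_const, nsmul_eq_mul]
    _ = ∑ v ∈ F, (1:ℝ)/(cv v) := Finset.sum_congr rfl (fun v hv => by rw [hfib v hv])
  -- bias bound
  have bias : |c - S| ≤ (n:ℝ)/k := by
    have hdiff : c - S = ∑ v, ((1:ℝ)/(cv v) - f v) := by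
      rw [comp_eq, hS, ← Finset.sum_sub_distrib]
    have term_nonneg : ∀ v : Fin n, 0 ≤ (1:ℝ)/(cv v) - f v := by
      intro v; rw [hf]; dsimp only; split
      · simp
      · simp only [sub_zero]; positivity
    have term_le : ∀ v : Fin n, (1:ℝ)/(cv v) - f v ≤ 1/k := by
      intro v; rw [hf]; dsimp only; split
      · simp
      · rename_i hcvk
        push_neg at hcvk
        simp only [sub_zero]
        apply one_div_le_one_div_of_le hkR
        exact_mod_cast hcvk.le
    have h1 : 0 ≤ c - S := hdiff ▸ Finset.sum_nonneg (fun v _ => term_nonneg v)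
    have h2 : c - S ≤ (n:ℝ)/k := by
      rw [hdiff]
      calc ∑ v, ((1:ℝ)/(cv v) - f v) ≤ ∑ _v : Fin n, (1:ℝ)/k :=
        Finset.sum_le_sum (fun v _ => term_le v)
      _ = (n:ℝ)/k := by
        rw [Finset.sum_const, Finset.card_univ, Fintype.card_fin, nsmul_eq_mul, mul_one_div]
    rw [abs_le]
    constructor
    · have : (0:ℝ) ≤ (n:ℝ)/k := by positivity
      linarith
    · exact h2
  set h : Fin n → ℝ := fun v => f v - μ with hh
  have h0 : ∑ v, h v = 0 := by
    rw [hh]; dsimp only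
    rw [Finset.sum_sub_distrib, Finset.sum_const, Finset.card_univ, Fintype.card_fin,
      nsmul_eq_mul, hnμ, ← hS, sub_self]
  have hsq1 : ∀ v, (h v)^2 ≤ 1 := by
    intro v
    have h1 := f_nonneg v
    have h2 := f_le_one v
    rw [hh]; dsimp only
    nlinarith
  have V_le : ∑ v, (h v)^2 ≤ (n:ℝ) := by
    calc ∑ v, (h v)^2 ≤ ∑ _v : Fin n, (1:ℝ) := Finset.sum_le_sum (fun v _ => hsq1 v)
    _ = n := by simp
  have var := aux_sq_sum (α := Fin n) r h h0
  rw [Fintype.card_fin] at var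
  have sum_bound : ∑ vs : Fin r → Fin n, (∑ i, h (vs i))^2 ≤ r * (n:ℝ)^r := by
    rw [var]
    calc (r:ℝ) * (n:ℝ)^(r-1) * ∑ v, (h v)^2 ≤ (r:ℝ) * (n:ℝ)^(r-1) * n := by
          apply mul_le_mul_of_nonneg_left V_le (by positivity)
    _ = r * (n:ℝ)^r := by
          rw [mul_assoc, ← pow_succ, Nat.sub_add_cancel hr]
  set Good := Finset.univ.filter (fun vs : Fin r → Fin n =>
      |c - (n:ℝ)/r * ∑ i, f (vs i)| < 2*(n:ℝ)/k) with hGood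
  have hBadsub : ∀ vs : Fin r → Fin n, vs ∉ Good → ((r:ℝ)/k)^2 ≤ (∑ i, h (vs i))^2 := by
    intro vs hvs
    have hTμ : ∑ i, h (vs i) = (∑ i, f (vs i)) - r * μ := by
      rw [hh]; dsimp only
      rw [Finset.sum_sub_distrib, Finset.sum_const, Finset.card_univ, Fintype.card_fin,
        nsmul_eq_mul]
    have hnot : ¬ (|c - (n:ℝ)/r * ∑ i, f (vs i)| < 2*(n:ℝ)/k) := by
      intro hcon
      exact hvs (Finset.mem_filter.mpr ⟨Finset.mem_univ _, hcon⟩)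
    by_contra hcon
    push_neg at hcon
    have habs : |∑ i, h (vs i)| < (r:ℝ)/k := abs_lt_of_sq_lt_sq hcon (by positivity)
    apply hnot
    set T : ℝ := ∑ i, f (vs i) with hT
    have key : c - (n:ℝ)/r * T = (c - S) + (n:ℝ)/r * (r*μ - T) := by
      have hx : (n:ℝ)/r * (r*μ) = n * μ := by field_simp
      have := hnμ
      linarith [hx, hnμ, mul_sub ((n:ℝ)/r) (r*μ) T]
    rw [key]
    calc |(c - S) + (n:ℝ)/r * (r*μ - T)| ≤ |c - S| + |(n:ℝ)/r * (r*μ - T)| := abs_add_le _ _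
    _ = |c - S| + ((n:ℝ)/r) * |T - r*μ| := by
          rw [abs_mul, abs_of_pos (by positivity : (0:ℝ) < (n:ℝ)/r), abs_sub_comm ((r:ℝ)*μ) T]
    _ < (n:ℝ)/k + ((n:ℝ)/r) * ((r:ℝ)/k) := by
          apply add_lt_add_of_le_of_lt bias
          apply mul_lt_mul_of_pos_left _ (by positivity : (0:ℝ) < (n:ℝ)/r)
          rw [← hTμ]; exact habs
    _ = 2*(n:ℝ)/k := by field_simp; ring
  -- counting
  have card_bound : (((Finset.univ \ Good).card : ℝ)) * ((r:ℝ)/k)^2 ≤ r * (n:ℝ)^r := by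
    calc (((Finset.univ \ Good).card : ℝ)) * ((r:ℝ)/k)^2
        = ∑ _vs ∈ Finset.univ \ Good, ((r:ℝ)/k)^2 := by
          rw [Finset.sum_const, nsmul_eq_mul]
    _ ≤ ∑ vs ∈ Finset.univ \ Good, (∑ i, h (vs i))^2 := by
          apply Finset.sum_le_sum
          intro vs hvs
          exact hBadsub vs (Finset.mem_sdiff.mp hvs).2
    _ ≤ ∑ vs : Fin r → Fin n, (∑ i, h (vs i))^2 := by
          apply Finset.sum_le_sum_of_subset_of_nonneg (Finset.sdiff_subset)
          intro vs _ _; positivity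
    _ ≤ r * (n:ℝ)^r := sum_bound
  have hrk2 : (0:ℝ) < ((r:ℝ)/k)^2 := by positivity
  have hbad : (((Finset.univ \ Good).card : ℝ)) ≤ (k:ℝ)^2/r * (n:ℝ)^r := by
    have h1 : (((Finset.univ \ Good).card : ℝ)) ≤ r * (n:ℝ)^r / ((r:ℝ)/k)^2 :=
      (le_div_iff₀ hrk2).mpr card_bound
    have h2 : r * (n:ℝ)^r / ((r:ℝ)/k)^2 = (k:ℝ)^2/r * (n:ℝ)^r := by
      field_simp
    linarith [h1, h2 ▸ h1]
  have hcardGood : ((Good.card : ℝ)) = (n:ℝ)^r - ((Finset.univ \ Good).card : ℝ) := by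
    have hsub : Good ⊆ Finset.univ := Finset.subset_univ _
    have : (Finset.univ \ Good).card = Fintype.card (Fin r → Fin n) - Good.card := by
      rw [Finset.card_sdiff_of_subset hsub, Finset.card_univ]
    rw [this]
    have hle : Good.card ≤ Fintype.card (Fin r → Fin n) := Finset.card_le_card hsub
    rw [Nat.cast_sub hle, Fintype.card_fun, Fintype.card_fin, Fintype.card_fin]
    push_cast
    ring
  rw [Fintype.card_fun, Fintype.card_fin, Fintype.card_fin]
  push_cast
  rw [le_div_iff₀ (by positivity : (0:ℝ) < (n:ℝ)^r)]
  push_cast at hbad hcardGood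
  nlinarith [hbad, hcardGood]
end
end
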